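/- arXiv:1812.03324 — 5 statements merged into one kernel-verified Lean document; each statement's English description precedes it below -/
import Mathlib

section
/- Let ρ > 1 and n ≥ 2 an integer. Then for every P ∈ P_n(ρ), the order-2 Rényi entropy (collision entropy) satisfies H_2(P) ≥ log(4ρn/(1+ρ)^2). -/
open Finset

/-- `P` is a probability mass function, strictly positive on `{1,…,n}`. -/
def IsPMF (n : ℕ) (P : ℕ → ℝ) : Prop :=
  (∀ i ∈ Finset.Icc 1 n, 0 < P i) ∧ ∑ i ∈ Finset.Icc 1 n, P i = 1

/-- The ratio of the maximal to minimal mass of `P` on `{1,…,n}` is at most `ρ`. -/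
def RatioBdd (n : ℕ) (ρ : ℝ) (P : ℕ → ℝ) : Prop :=
  ∀ i ∈ Finset.Icc 1 n, ∀ j ∈ Finset.Icc 1 n, P i ≤ ρ * P j

/-- `P` is nonincreasing on `{1,…,n}`. -/
def DecOn (n : ℕ) (P : ℕ → ℝ) : Prop :=
  ∀ i ∈ Finset.Icc 1 n, ∀ j ∈ Finset.Icc 1 n, i ≤ j → P j ≤ P i

/-- Sum of the `k` largest masses of `P` on `{1,…,n}`. -/
noncomputable def topSum (n : ℕ) (P : ℕ → ℝ) (k : ℕ) : ℝ :=
  sSup ((fun s : Finset ℕ => ∑ i ∈ s, P i) '' {s | s ⊆ Finset.Icc 1 n ∧ s.card = k})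

/-- `P ≺ Q`: `P` is majorized by `Q`, both viewed on `{1,…,n}`. -/
def MajorizedBy (n : ℕ) (P Q : ℕ → ℝ) : Prop :=
  ∀ k, 1 ≤ k → k ≤ n - 1 → topSum n P k ≤ topSum n Q k

/-- Zero-padding of a pmf on `{1,…,m}` outside of `{1,…,m}`. -/
def padTo (m : ℕ) (Q : ℕ → ℝ) : ℕ → ℝ := fun i => if i ≤ m then Q i else 0

/-- Rényi entropy of order `α` of `P` on `{1,…,n}` (Shannon entropy for `α = 1`);
natural logarithms. -/
noncomputable def renyiH (n : ℕ) (α : ℝ) (P : ℕ → ℝ) : ℝ :=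
  if α = 1 then -∑ i ∈ Finset.Icc 1 n, P i * Real.log (P i)
  else (1 - α)⁻¹ * Real.log (∑ i ∈ Finset.Icc 1 n, P i ^ α)

/-- `c_α^{(n)}(ρ) = log n − min_{P ∈ 𝒫_n(ρ)} H_α(P)` for `n ≥ 2`, and `0` for `n ≤ 1`. -/
noncomputable def cN (α ρ : ℝ) (n : ℕ) : ℝ :=
  if n ≤ 1 then 0
  else Real.log n - sInf (renyiH n α '' {P | IsPMF n P ∧ RatioBdd n ρ P})

/-- The closed-form expression for `c_α^{(∞)}(ρ)`, `α ∈ (0,1) ∪ (1,∞)`. -/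
noncomputable def cInfinity (α ρ : ℝ) : ℝ :=
  (α - 1)⁻¹ * Real.log (1 + (1 + α * (ρ - 1) - ρ ^ α) / ((1 - α) * (ρ - 1)))
    - α / (α - 1) * Real.log (1 + (1 + α * (ρ - 1) - ρ ^ α) / ((1 - α) * (ρ ^ α - 1)))

/-- `v(α) := c_α^{(∞)}(2)`, with the continuous extension at `α = 1`. -/
noncomputable def vFun (α : ℝ) : ℝ :=
  if α = 1 then Real.log (2 / (Real.exp 1 * Real.log 2))
  else Real.log ((α - 1) / ((2 : ℝ) ^ α - 2)) - α / (α - 1) * Real.log (α / ((2 : ℝ) ^ α - 1))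

/-- `n*`: the maximal `i ∈ {1,…,m−1}` with `P i ≥ (m−i)⁻¹ ∑_{j=i+1}^n P j`. -/
noncomputable def nStar (n m : ℕ) (P : ℕ → ℝ) : ℕ :=
  sSup {i : ℕ | 1 ≤ i ∧ i ≤ m - 1 ∧
    ((m : ℝ) - (i : ℝ))⁻¹ * ∑ j ∈ Finset.Icc (i + 1) n, P j ≤ P i}

/-- The pmf of `X̃_m` on `{1,…,m}`, built from a nonincreasing pmf `P` on `{1,…,n}`. -/
noncomputable def tildeX (n m : ℕ) (P : ℕ → ℝ) : ℕ → ℝ := fun i =>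
  if P 1 < 1 / (m : ℝ) then 1 / (m : ℝ)
  else if i ≤ nStar n m P then P i
  else ((m : ℝ) - (nStar n m P : ℝ))⁻¹ * ∑ j ∈ Finset.Icc (nStar n m P + 1) n, P j

/-- The pmf of `Ỹ_m` on `{1,…,m}`. -/
def tildeY (n m : ℕ) (P : ℕ → ℝ) : ℕ → ℝ := fun i =>
  if i = 1 then ∑ j ∈ Finset.Icc 1 (n - m + 1), P j else P (n - m + i)

/-- The pmf of `f(X)`: `(push n f P) j = ∑_{i ∈ {1,…,n}, f i = j} P i`. -/
def push (n : ℕ) (f : ℕ → ℕ) (P : ℕ → ℝ) : ℕ → ℝ := fun j =>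
  ∑ i ∈ (Finset.Icc 1 n).filter (fun i => f i = j), P i

/-- The set `{1,…,n}^k` of source sequences of length `k`. -/
def seqSet (n k : ℕ) : Finset (Fin k → ℕ) := Fintype.piFinset fun _ => Finset.Icc 1 n

/-- Product (i.i.d.) probability of a sequence. -/
def prodP (k : ℕ) (P : ℕ → ℝ) (x : Fin k → ℕ) : ℝ := ∏ i, P (x i)

/-- `g` is a ranking function for the i.i.d. vector on `{1,…,n}^k` with marginal `P`:
a bijection onto `{1,…,n^k}` which assigns smaller ranks to larger masses. -/
def IsRanking (n k : ℕ) (P : ℕ → ℝ) (g : (Fin k → ℕ) → ℕ) : Prop :=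
  Set.BijOn g (↑(seqSet n k)) (Set.Icc 1 (n ^ k)) ∧
    ∀ x ∈ seqSet n k, ∀ y ∈ seqSet n k, prodP k P y < prodP k P x → g x < g y

/-- The `ρ`-th guessing moment `E[g(Z^k)^ρ]`. -/
noncomputable def gmoment (n k : ℕ) (P : ℕ → ℝ) (g : (Fin k → ℕ) → ℕ) (ρ : ℝ) : ℝ :=
  ∑ x ∈ seqSet n k, prodP k P x * (g x : ℝ) ^ ρ

/-- Kraft inequality for a `D`-ary length function on `{1,…,n}^k`. -/
def Kraft (n k D : ℕ) (ℓ : (Fin k → ℕ) → ℕ) : Prop :=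
  ∑ x ∈ seqSet n k, (D : ℝ) ^ (-(ℓ x : ℝ)) ≤ 1

/-- Scaled cumulant generating function `Λ_k(ρ)` of the codeword lengths (base-`D` log). -/
noncomputable def cgf (n k D : ℕ) (P : ℕ → ℝ) (ℓ : (Fin k → ℕ) → ℕ) (ρ : ℝ) : ℝ :=
  (1 / (k : ℝ)) * Real.logb D (∑ x ∈ seqSet n k, prodP k P x * (D : ℝ) ^ (ρ * (ℓ x : ℝ)))

/-- `i_β` of Lemma 2. -/
noncomputable def iBeta (n : ℕ) (ρ β : ℝ) : ℕ := Nat.floor ((1 - (n : ℝ) * β) / ((ρ - 1) * β))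

/-- The pmf `Q_β` of Lemma 2. -/
noncomputable def Qbeta (n : ℕ) (ρ β : ℝ) : ℕ → ℝ := fun j =>
  if j ≤ iBeta n ρ β then ρ * β
  else if j = iBeta n ρ β + 1 then
    1 - ((n : ℝ) + (iBeta n ρ β : ℝ) * ρ - (iBeta n ρ β : ℝ) - 1) * β
  else β

theorem stmt10 (n : ℕ) (hn : 2 ≤ n) (ρ : ℝ) (hρ : 1 < ρ)
    (P : ℕ → ℝ) (hP : IsPMF n P) (hPρ : RatioBdd n ρ P) :
    Real.log (4 * ρ * n / (1 + ρ) ^ 2) ≤ -Real.log (∑ i ∈ Finset.Icc 1 n, P i ^ 2) := by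
  obtain ⟨hpos, hsum⟩ := hP
  have hne : (Finset.Icc 1 n).Nonempty := ⟨1, by simp; omega⟩
  obtain ⟨j₀, hj₀, hmin⟩ := Finset.exists_min_image (Finset.Icc 1 n) P hne
  set a := P j₀ with ha
  have ha0 : 0 < a := hpos j₀ hj₀
  have key : ∀ i ∈ Finset.Icc 1 n, P i ^ 2 ≤ (1 + ρ) * a * P i - ρ * a ^ 2 := by
    intro i hi
    have h1 : a ≤ P i := hmin i hi
    have h2 : P i ≤ ρ * a := hPρ i hi j₀ hj₀
    nlinarith [mul_nonneg (sub_nonneg.2 h1) (sub_nonneg.2 h2)]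
  have hS : ∑ i ∈ Finset.Icc 1 n, P i ^ 2 ≤ (1 + ρ) * a - n * ρ * a ^ 2 := by
    calc ∑ i ∈ Finset.Icc 1 n, P i ^ 2
        ≤ ∑ i ∈ Finset.Icc 1 n, ((1 + ρ) * a * P i - ρ * a ^ 2) :=
          Finset.sum_le_sum key
      _ = (1 + ρ) * a - n * ρ * a ^ 2 := by
          rw [Finset.sum_sub_distrib, ← Finset.mul_sum, hsum, Finset.sum_const,
            Nat.card_Icc]
          have : n + 1 - 1 = n := by omega
          rw [this]; ring
  have hn0 : (0:ℝ) < n := by positivity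
  have hρ0 : (0:ℝ) < ρ := by linarith
  have hS2 : ∑ i ∈ Finset.Icc 1 n, P i ^ 2 ≤ (1 + ρ) ^ 2 / (4 * ρ * n) := by
    have h := hS
    have hq : (1 + ρ) * a - n * ρ * a ^ 2 ≤ (1 + ρ) ^ 2 / (4 * ρ * n) := by
      rw [le_div_iff₀ (by positivity)]
      nlinarith [sq_nonneg (2 * ρ * n * a - (1 + ρ)), hn0, hρ0]
    linarith
  have hSpos : 0 < ∑ i ∈ Finset.Icc 1 n, P i ^ 2 := by
    have h1 : (1:ℕ) ∈ Finset.Icc 1 n := by simp; omega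
    have := hpos 1 h1
    exact Finset.sum_pos' (fun i hi => sq_nonneg _) ⟨1, h1, by positivity⟩
  have hlog : Real.log (∑ i ∈ Finset.Icc 1 n, P i ^ 2) ≤
      Real.log ((1 + ρ) ^ 2 / (4 * ρ * n)) := Real.log_le_log hSpos hS2
  have heq : Real.log (4 * ρ * n / (1 + ρ) ^ 2) =
      -Real.log ((1 + ρ) ^ 2 / (4 * ρ * n)) := by
    rw [← Real.log_inv]
    congr 1
    field_simp
  rw [heq]
  linarith
end

section
/- Let n > m ≥ 2 be integers and let X be a random variable on {1,…,n} with probability mass function P_X satisfying P_X(1) ≥ P_X(2) ≥ … ≥ P_X(n). Define the probability mass function P_{X̃_m} on {1,…,m} as follows: if P_X(1) < 1/m, then P_{X̃_m} is the uniform distribution on {1,…,m}; otherwise P_{X̃_m}(i) = P_X(i) for i ∈ {1,…,n*} and P_{X̃_m}(i) = (1/(m−n*))·Σ_{j=n*+1}^{n} P_X(j) for i ∈ {n*+1,…,m}, where n* is the maximal integer i ∈ {1,…,m−1} such that P_X(i) ≥ (1/(m−i))·Σ_{j=i+1}^{n} P_X(j). Then for every α > 0, the maximum of H_α(Q) over all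 probability mass functions Q on {1,…,m} that majorize P_X equals H_α(P_{X̃_m}). -/
open Finset

/-!
Rényi entropy is Schur concave on nonincreasing pmfs (Karamata's inequality, through the tangent
lines of `x ^ α` and `x * log x` and Abel summation), so it suffices to show that `X̃_m` is the
least element, for majorization, among the nonincreasing pmfs on `{1,…,m}` majorizing `P`.
`X̃_m` is a water filling of `P`: it keeps the `n*` largest masses and spreads the remaining mass
evenly over the other `m - n*` slots (`n* = 0` in the uniform case). The choice of `n*` makes it
nonincreasing and majorizing `P`. It is majorized by every competitor `q`, because the prefix sums
of a nonincreasing `q` are concave in the length, so from `k = n*` to `k = m` they lie above the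
chord, and the chord is exactly the prefix-sum profile of `X̃_m`.
-/

/-- For nonincreasing `p` and `q` this is majorization. -/
def PrefixLE (m : ℕ) (p q : ℕ → ℝ) : Prop :=
  ∀ k ≤ m, ∑ i ∈ Icc 1 k, p i ≤ ∑ i ∈ Icc 1 k, q i

lemma sum_Icc_add_sum_Ioc (f : ℕ → ℝ) {j k : ℕ} (hjk : j ≤ k) :
    ∑ i ∈ Icc 1 j, f i + ∑ i ∈ Ioc j k, f i = ∑ i ∈ Icc 1 k, f i := by
  simpa only [← Icc_add_one_left_eq_Ioc 0, zero_add] using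
    sum_Ioc_consecutive f (Nat.zero_le j) hjk

lemma sum_Ioc_le_mul {f : ℕ → ℝ} {j k : ℕ} (hjk : j ≤ k) {c : ℝ}
    (h : ∀ i ∈ Ioc j k, f i ≤ c) : ∑ i ∈ Ioc j k, f i ≤ ((k : ℝ) - j) * c := by
  have := sum_le_card_nsmul _ _ _ h
  rwa [Nat.card_Ioc, nsmul_eq_mul, Nat.cast_sub hjk] at this

lemma mul_le_sum_Ioc {f : ℕ → ℝ} {j k : ℕ} (hjk : j ≤ k) {c : ℝ}
    (h : ∀ i ∈ Ioc j k, c ≤ f i) : ((k : ℝ) - j) * c ≤ ∑ i ∈ Ioc j k, f i := by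
  have := card_nsmul_le_sum _ _ _ h
  rwa [Nat.card_Ioc, nsmul_eq_mul, Nat.cast_sub hjk] at this

section Antitone

variable {m : ℕ} {q : ℕ → ℝ}

lemma sum_le_sum_Icc_of_decOn (hq : DecOn m q) {s : Finset ℕ} (hs : s ⊆ Icc 1 m) :
    ∑ i ∈ s, q i ≤ ∑ i ∈ Icc 1 s.card, q i := by
  set k := s.card
  have hkm : k ≤ m := by simpa using card_le_card hs
  have hcard : #(s \ Icc 1 k) = #(Icc 1 k \ s) := card_sdiff_comm (by simp [k])
  have hout : ∑ i ∈ s \ Icc 1 k, q i ≤ #(s \ Icc 1 k) • q k :=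
    sum_le_card_nsmul _ _ _ fun j hj => by
      obtain ⟨hjs, hjk⟩ := mem_sdiff.1 hj
      have hk : 0 < k := card_pos.2 ⟨j, hjs⟩
      exact hq k (mem_Icc.2 ⟨hk, hkm⟩) j (hs hjs) (by grind)
  have hin : #(Icc 1 k \ s) • q k ≤ ∑ i ∈ Icc 1 k \ s, q i :=
    card_nsmul_le_sum _ _ _ fun i hi => by
      have hik := mem_Icc.1 (mem_sdiff.1 hi).1
      exact hq i (mem_Icc.2 ⟨hik.1, hik.2.trans hkm⟩) k (mem_Icc.2 ⟨hik.1.trans hik.2, hkm⟩) hik.2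
  rw [← sum_inter_add_sum_sdiff s (Icc 1 k), ← sum_inter_add_sum_sdiff (Icc 1 k) s, inter_comm]
  rw [hcard] at hout
  linarith

lemma topSum_eq_sum_Icc (hq : DecOn m q) {k : ℕ} (hkm : k ≤ m) :
    topSum m q k = ∑ i ∈ Icc 1 k, q i := by
  refine IsGreatest.csSup_eq ⟨⟨Icc 1 k, ⟨Icc_subset_Icc_right hkm, by simp⟩, rfl⟩, ?_⟩
  rintro x ⟨s, ⟨hs, rfl⟩, rfl⟩
  exact sum_le_sum_Icc_of_decOn hq hs

/-- Prefix sums of a nonincreasing sequence are concave in the length. -/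
lemma sum_Icc_concave (hq : DecOn m q) {j k : ℕ} (hjk : j ≤ k) (hkm : k ≤ m) :
    ((m : ℝ) - k) * ∑ i ∈ Icc 1 j, q i + ((k : ℝ) - j) * ∑ i ∈ Icc 1 m, q i
      ≤ ((m : ℝ) - j) * ∑ i ∈ Icc 1 k, q i := by
  rcases hjk.eq_or_lt with rfl | hjk
  · simp
  have hk : k ∈ Icc 1 m := mem_Icc.2 ⟨by omega, hkm⟩
  have ha : ((k : ℝ) - j) * q k ≤ ∑ i ∈ Ioc j k, q i :=
    mul_le_sum_Ioc hjk.le fun i hi =>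
      hq i (mem_Icc.2 ⟨by grind, by grind⟩) k hk (mem_Ioc.1 hi).2
  have hb : ∑ i ∈ Ioc k m, q i ≤ ((m : ℝ) - k) * q k :=
    sum_Ioc_le_mul hkm fun i hi =>
      hq k hk i (mem_Icc.2 ⟨by grind, (mem_Ioc.1 hi).2⟩) (mem_Ioc.1 hi).1.le
  rw [← sum_Icc_add_sum_Ioc q hjk.le, ← sum_Icc_add_sum_Ioc q hkm, ← sum_Icc_add_sum_Ioc q hjk.le]
  have hmk : (0 : ℝ) ≤ m - k := by rw [sub_nonneg]; exact_mod_cast hkm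
  have hkj : (0 : ℝ) ≤ k - j := by rw [sub_nonneg]; exact_mod_cast hjk.le
  nlinarith [mul_le_mul_of_nonneg_left ha hmk, mul_le_mul_of_nonneg_left hb hkj]

lemma mul_sum_Icc_le_sum_Icc_mul {c d : ℕ → ℝ} (hc : DecOn m c)
    (hd : ∀ k ≤ m, 0 ≤ ∑ i ∈ Icc 1 k, d i) :
    ∀ k ≤ m, c k * ∑ i ∈ Icc 1 k, d i ≤ ∑ i ∈ Icc 1 k, c i * d i := by
  intro k
  induction k with
  | zero => simp
  | succ k ih =>
    intro hk
    rw [sum_Icc_succ_top (by omega), sum_Icc_succ_top (by omega)]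
    rcases Nat.eq_zero_or_pos k with rfl | hk0
    · simp
    have hck := hc k (mem_Icc.2 ⟨hk0, by omega⟩) (k + 1) (mem_Icc.2 ⟨by omega, hk⟩) k.le_succ
    nlinarith [ih (by omega), hd k (by omega)]

end Antitone

section Padding

variable {m : ℕ}

lemma sum_Icc_padTo_of_le (R : ℕ → ℝ) {k : ℕ} (hkm : k ≤ m) :
    ∑ i ∈ Icc 1 k, padTo m R i = ∑ i ∈ Icc 1 k, R i :=
  sum_congr rfl fun _ hi => if_pos ((mem_Icc.1 hi).2.trans hkm)

lemma sum_Icc_padTo_of_ge (R : ℕ → ℝ) {k : ℕ} (hmk : m ≤ k) :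
    ∑ i ∈ Icc 1 k, padTo m R i = ∑ i ∈ Icc 1 m, R i := by
  have htail : ∑ i ∈ Ioc m k, padTo m R i = 0 :=
    sum_eq_zero fun _ hi => if_neg (mem_Ioc.1 hi).1.not_ge
  rw [← sum_Icc_add_sum_Ioc _ hmk, sum_Icc_padTo_of_le R le_rfl, htail, add_zero]

lemma DecOn.padTo {R : ℕ → ℝ} (hR : DecOn m R) (hpos : ∀ i ∈ Icc 1 m, 0 < R i) (n : ℕ) :
    DecOn n (padTo m R) := by
  intro i hi j hj hij
  unfold _root_.padTo
  by_cases hjm : j ≤ m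
  · rw [if_pos hjm, if_pos (hij.trans hjm)]
    exact hR i (mem_Icc.2 ⟨(mem_Icc.1 hi).1, hij.trans hjm⟩) j
      (mem_Icc.2 ⟨(mem_Icc.1 hj).1, hjm⟩) hij
  · rw [if_neg hjm]
    split_ifs with him
    · exact (hpos i (mem_Icc.2 ⟨(mem_Icc.1 hi).1, him⟩)).le
    · exact le_rfl

end Padding

lemma IsPMF.sum_Icc_le_one {n : ℕ} {P : ℕ → ℝ} (hP : IsPMF n P) {k : ℕ} (hkn : k ≤ n) :
    ∑ i ∈ Icc 1 k, P i ≤ 1 :=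
  hP.2 ▸ sum_le_sum_of_subset_of_nonneg (Icc_subset_Icc_right hkn) fun i hi _ => (hP.1 i hi).le

lemma majorizedBy_padTo_iff {n m : ℕ} (hmn : m < n) {P Q : ℕ → ℝ} (hP : IsPMF n P)
    (hPdec : DecOn n P) (hQ : IsPMF m Q) (hQdec : DecOn m Q) :
    MajorizedBy n P (padTo m Q) ↔ PrefixLE m P Q := by
  have hQpad := hQdec.padTo hQ.1 n
  constructor
  · intro h k hkm
    rcases Nat.eq_zero_or_pos k with rfl | hk
    · simp
    have := h k hk (by omega)
    rwa [topSum_eq_sum_Icc hPdec (by omega), topSum_eq_sum_Icc hQpad (by omega),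
      sum_Icc_padTo_of_le Q hkm] at this
  · intro h k _ hkn
    rw [topSum_eq_sum_Icc hPdec (by omega), topSum_eq_sum_Icc hQpad (by omega)]
    rcases le_total k m with hkm | hmk
    · rw [sum_Icc_padTo_of_le Q hkm]
      exact h k hkm
    · rw [sum_Icc_padTo_of_ge Q hmk, hQ.2]
      exact hP.sum_Icc_le_one (by omega)

lemma Equiv.Perm.apply_mem_of_setSupport_subset {α : Type*} {σ : Equiv.Perm α} {s : Set α}
    (hσ : {i | σ i ≠ i} ⊆ s) {i : α} (hi : i ∈ s) : σ i ∈ s := by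
  by_cases h : σ i = i
  · rwa [h]
  · exact hσ fun h' => h (σ.injective h')

lemma exists_perm_decOn (m : ℕ) (Q : ℕ → ℝ) :
    ∃ σ : Equiv.Perm ℕ, {i | σ i ≠ i} ⊆ Icc 1 m ∧ DecOn m (Q ∘ σ) := by
  let e := (Icc 1 m).orderIsoOfFin (by simp : #(Icc 1 m) = m)
  let g : Fin m → ℝ := fun k => -Q (e k)
  let τ : Equiv.Perm (Icc 1 m) := (e.toEquiv.symm.trans (Tuple.sort g)).trans e.toEquiv
  refine ⟨Equiv.Perm.ofSubtype τ, fun i hi => ?_, fun i hi j hj hij => ?_⟩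
  · by_contra h
    exact hi (Equiv.Perm.ofSubtype_apply_of_not_mem τ h)
  · have hmono :=
      Tuple.monotone_sort g (e.symm.monotone (show (⟨i, hi⟩ : Icc 1 m) ≤ ⟨j, hj⟩ from hij))
    simp only [Function.comp_apply, Equiv.Perm.ofSubtype_apply_of_mem τ hi,
      Equiv.Perm.ofSubtype_apply_of_mem τ hj]
    simp only [Function.comp_apply, g] at hmono
    exact neg_le_neg_iff.1 hmono

section Perm

variable {m : ℕ} {σ : Equiv.Perm ℕ}

lemma topSum_comp_perm (n : ℕ) (R : ℕ → ℝ) (hσ : {i | σ i ≠ i} ⊆ Icc 1 n)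
    (k : ℕ) : topSum n (R ∘ σ) k = topSum n R k := by
  have hsub : ∀ (τ : Equiv.Perm ℕ), {i | τ i ≠ i} ⊆ Icc 1 n → ∀ F : ℕ → ℝ,
      (fun s : Finset ℕ => ∑ i ∈ s, F (τ i)) '' {s | s ⊆ Icc 1 n ∧ s.card = k} ⊆
        (fun s : Finset ℕ => ∑ i ∈ s, F i) '' {s | s ⊆ Icc 1 n ∧ s.card = k} := by
    rintro τ hτ F _ ⟨s, ⟨hs, hk⟩, rfl⟩
    refine ⟨s.map τ.toEmbedding, ⟨?_, by simpa using hk⟩, by simp⟩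
    rw [← map_perm hτ]
    exact map_subset_map.2 hs
  refine congrArg sSup (subset_antisymm (hsub σ hσ R) ?_)
  simpa using hsub σ.symm (by rwa [Equiv.Perm.set_support_symm_eq]) (R ∘ σ)

lemma IsPMF.comp_perm {Q : ℕ → ℝ} (hQ : IsPMF m Q) (hσ : {i | σ i ≠ i} ⊆ Icc 1 m) :
    IsPMF m (Q ∘ σ) :=
  ⟨fun _ hi => hQ.1 _ (σ.apply_mem_of_setSupport_subset hσ hi), (σ.sum_comp _ Q hσ).trans hQ.2⟩

lemma renyiH_comp_perm (Q : ℕ → ℝ) (hσ : {i | σ i ≠ i} ⊆ Icc 1 m) (α : ℝ) :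
    renyiH m α (Q ∘ σ) = renyiH m α Q := by
  simp only [renyiH, Function.comp_apply, σ.sum_comp _ (fun i => Q i * Real.log (Q i)) hσ,
    σ.sum_comp _ (fun i => Q i ^ α) hσ]

lemma padTo_comp_perm (Q : ℕ → ℝ) (hσ : {i | σ i ≠ i} ⊆ Icc 1 m) :
    padTo m (Q ∘ σ) = padTo m Q ∘ σ := by
  funext i
  by_cases h : σ i = i
  · simp [padTo, h]
  · have hi : i ∈ Icc 1 m := hσ h
    have hσi := σ.apply_mem_of_setSupport_subset hσ hi
    simp only [padTo, Function.comp_apply, if_pos (mem_Icc.1 hi).2, if_pos (mem_Icc.1 hσi).2]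

end Perm

/-- Karamata's inequality, with the convex function `φ` given by its tangent lines. -/
lemma sum_le_sum_of_prefixLE {m : ℕ} {p q : ℕ → ℝ} {φ ψ : ℝ → ℝ} (hpdec : DecOn m p)
    (hp : ∀ i ∈ Icc 1 m, 0 < p i) (hq : ∀ i ∈ Icc 1 m, 0 < q i) (hpq : PrefixLE m p q)
    (hsum : ∑ i ∈ Icc 1 m, p i = ∑ i ∈ Icc 1 m, q i)
    (htangent : ∀ x > 0, ∀ y > 0, φ x + ψ x * (y - x) ≤ φ y) (hψ : MonotoneOn ψ (Set.Ioi 0)) :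
    ∑ i ∈ Icc 1 m, φ (p i) ≤ ∑ i ∈ Icc 1 m, φ (q i) := by
  have hc : DecOn m (fun i => ψ (p i)) := fun i hi j hj hij =>
    hψ (hp j hj) (hp i hi) (hpdec i hi j hj hij)
  have hd : ∀ k ≤ m, 0 ≤ ∑ i ∈ Icc 1 k, (q i - p i) := fun k hk => by
    rw [sum_sub_distrib, sub_nonneg]
    exact hpq k hk
  have habel := mul_sum_Icc_le_sum_Icc_mul hc hd m le_rfl
  rw [sum_sub_distrib, hsum, sub_self, mul_zero] at habel
  calc ∑ i ∈ Icc 1 m, φ (p i)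
      ≤ ∑ i ∈ Icc 1 m, (φ (p i) + ψ (p i) * (q i - p i)) := by
        rw [sum_add_distrib]; linarith
    _ ≤ ∑ i ∈ Icc 1 m, φ (q i) := sum_le_sum fun i hi => htangent _ (hp i hi) _ (hq i hi)

section Tangent

variable {α x y : ℝ}

lemma rpow_tangent_eq (hx : 0 < x) :
    x ^ α + α * x ^ (α - 1) * (y - x) = x ^ α * (1 + α * (y / x - 1)) := by
  rw [Real.rpow_sub_one hx.ne']
  field_simp

lemma rpow_add_mul_rpow_sub_one_le (hα : 1 ≤ α) (hx : 0 < x) (hy : 0 < y) :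
    x ^ α + α * x ^ (α - 1) * (y - x) ≤ y ^ α := by
  have hb := one_add_mul_self_le_rpow_one_add (s := y / x - 1) (by linarith [div_pos hy hx]) hα
  rw [add_sub_cancel, Real.div_rpow hy.le hx.le] at hb
  rw [rpow_tangent_eq hx]
  calc x ^ α * (1 + α * (y / x - 1)) ≤ x ^ α * (y ^ α / x ^ α) := by gcongr
    _ = y ^ α := by field_simp

lemma rpow_le_rpow_add_mul_rpow_sub_one (hα₀ : 0 ≤ α) (hα₁ : α ≤ 1) (hx : 0 < x) (hy : 0 < y) :
    y ^ α ≤ x ^ α + α * x ^ (α - 1) * (y - x) := by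
  have hb := rpow_one_add_le_one_add_mul_self (s := y / x - 1) (by linarith [div_pos hy hx]) hα₀ hα₁
  rw [add_sub_cancel, Real.div_rpow hy.le hx.le] at hb
  rw [rpow_tangent_eq hx]
  calc y ^ α = x ^ α * (y ^ α / x ^ α) := by field_simp
    _ ≤ x ^ α * (1 + α * (y / x - 1)) := by gcongr

lemma mul_log_add_le_mul_log (hx : 0 < x) (hy : 0 < y) :
    x * Real.log x + (Real.log x + 1) * (y - x) ≤ y * Real.log y := by
  have h := Real.log_le_sub_one_of_pos (div_pos hx hy)
  rw [Real.log_div hx.ne' hy.ne', le_sub_iff_add_le, le_div_iff₀ hy] at h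
  nlinarith

end Tangent

lemma IsPMF.sum_rpow_pos {m : ℕ} {p : ℕ → ℝ} (hp : IsPMF m p) (α : ℝ) :
    0 < ∑ i ∈ Icc 1 m, p i ^ α :=
  sum_pos (fun i hi => Real.rpow_pos_of_pos (hp.1 i hi) α)
    (nonempty_of_sum_ne_zero (hp.2 ▸ one_ne_zero))

/-- Schur concavity of the Rényi entropy. -/
lemma renyiH_le_of_prefixLE {m : ℕ} {p q : ℕ → ℝ} (hp : IsPMF m p) (hq : IsPMF m q)
    (hpdec : DecOn m p) (hpq : PrefixLE m p q) {α : ℝ} (hα : 0 < α) :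
    renyiH m α q ≤ renyiH m α p := by
  have karamata := fun φ ψ htangent hψ =>
    sum_le_sum_of_prefixLE (φ := φ) (ψ := ψ) hpdec hp.1 hq.1 hpq (hp.2.trans hq.2.symm) htangent hψ
  unfold renyiH
  rcases lt_trichotomy α 1 with hα1 | rfl | hα1
  · have h := karamata (fun x => -x ^ α) (fun x => -(α * x ^ (α - 1)))
      (fun x hx y hy => by linarith [rpow_le_rpow_add_mul_rpow_sub_one hα.le hα1.le hx hy])
      (fun x hx y _ hxy => by
        have := Real.rpow_le_rpow_of_nonpos hx hxy (by linarith : α - 1 ≤ 0)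
        simp only [neg_le_neg_iff]
        gcongr)
    simp only [sum_neg_distrib, neg_le_neg_iff] at h
    simp only [if_neg hα1.ne]
    exact mul_le_mul_of_nonneg_left (Real.log_le_log (hq.sum_rpow_pos α) h)
      (inv_nonneg.2 (by linarith))
  · have h := karamata (fun x => x * Real.log x) (fun x => Real.log x + 1)
      (fun x hx y hy => mul_log_add_le_mul_log hx hy)
      (fun x hx y _ hxy => by simpa using Real.log_le_log hx hxy)
    simp only [↓reduceIte]
    linarith
  · have h := karamata (fun x => x ^ α) (fun x => α * x ^ (α - 1))
      (fun x hx y hy => rpow_add_mul_rpow_sub_one_le hα1.le hx hy)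
      (fun x hx y _ hxy => by
        have := Real.rpow_le_rpow (le_of_lt hx) hxy (by linarith : 0 ≤ α - 1)
        dsimp only
        gcongr)
    simp only [if_neg hα1.ne']
    exact mul_le_mul_of_nonpos_left (Real.log_le_log (hp.sum_rpow_pos α) h)
      (inv_nonpos.2 (by linarith))

lemma renyiH_congr {m : ℕ} {p q : ℕ → ℝ} (h : Set.EqOn p q (Icc 1 m)) (α : ℝ) :
    renyiH m α p = renyiH m α q := by
  unfold renyiH
  rw [sum_congr rfl (f := fun i => p i * Real.log (p i)) fun i hi => by rw [h hi],
    sum_congr rfl (f := fun i => p i ^ α) fun i hi => by rw [h hi]]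

lemma isGreatest_renyiH_of_prefixLE {n m : ℕ} (hmn : m < n) {P X : ℕ → ℝ} (hP : IsPMF n P)
    (hPdec : DecOn n P) (hX : IsPMF m X) (hXdec : DecOn m X) (hPX : PrefixLE m P X)
    (hXmin : ∀ q, IsPMF m q → DecOn m q → PrefixLE m P q → PrefixLE m X q) {α : ℝ} (hα : 0 < α) :
    IsGreatest (renyiH m α '' {Q | IsPMF m Q ∧ MajorizedBy n P (padTo m Q)}) (renyiH m α X) := by
  refine ⟨⟨X, ⟨hX, (majorizedBy_padTo_iff hmn hP hPdec hX hXdec).2 hPX⟩, rfl⟩, ?_⟩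
  rintro _ ⟨Q, ⟨hQ, hPQ⟩, rfl⟩
  obtain ⟨σ, hσ, hQσdec⟩ := exists_perm_decOn m Q
  have hQσ := hQ.comp_perm hσ
  have hPQσ : MajorizedBy n P (padTo m (Q ∘ σ)) := fun k hk hkn => by
    have hσn : {i | σ i ≠ i} ⊆ Icc 1 n := hσ.trans (coe_subset.2 (Icc_subset_Icc_right hmn.le))
    rw [padTo_comp_perm Q hσ, topSum_comp_perm n _ hσn]
    exact hPQ k hk hkn
  rw [← renyiH_comp_perm Q hσ]
  exact renyiH_le_of_prefixLE hX hQσ hXdec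
    (hXmin _ hQσ hQσdec ((majorizedBy_padTo_iff hmn hP hPdec hQσ hQσdec).1 hPQσ)) hα

noncomputable def tailMean (n m N : ℕ) (P : ℕ → ℝ) : ℝ :=
  ((m : ℝ) - N)⁻¹ * ∑ j ∈ Icc (N + 1) n, P j

noncomputable def waterFill (n m N : ℕ) (P : ℕ → ℝ) : ℕ → ℝ := fun i =>
  if i ≤ N then P i else tailMean n m N P

section WaterFill

variable {n m N : ℕ} {P : ℕ → ℝ}

lemma sum_Icc_add_mul_tailMean (hP : IsPMF n P) (hNm : N < m) (hNn : N ≤ n) :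
    ∑ i ∈ Icc 1 N, P i + ((m : ℝ) - N) * tailMean n m N P = 1 := by
  have hmN : (m : ℝ) - N ≠ 0 := sub_ne_zero.2 (by exact_mod_cast hNm.ne')
  rw [tailMean, mul_inv_cancel_left₀ hmN, Icc_add_one_left_eq_Ioc, sum_Icc_add_sum_Ioc _ hNn, hP.2]

lemma tailMean_pos (hP : IsPMF n P) (hNm : N < m) (hNn : N < n) : 0 < tailMean n m N P := by
  have hmN : (0 : ℝ) < m - N := sub_pos.2 (by exact_mod_cast hNm)
  refine mul_pos (inv_pos.2 hmN) (sum_pos (fun i hi => hP.1 i ?_) ⟨N + 1, by simp [hNn]⟩)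
  exact Icc_subset_Icc_left (Nat.le_add_left 1 N) hi

lemma sum_Icc_waterFill_of_le {k : ℕ} (hkN : k ≤ N) :
    ∑ i ∈ Icc 1 k, waterFill n m N P i = ∑ i ∈ Icc 1 k, P i :=
  sum_congr rfl fun _ hi => if_pos ((mem_Icc.1 hi).2.trans hkN)

lemma sum_Icc_waterFill_of_ge {k : ℕ} (hNk : N ≤ k) :
    ∑ i ∈ Icc 1 k, waterFill n m N P i
      = ∑ i ∈ Icc 1 N, P i + ((k : ℝ) - N) * tailMean n m N P := by
  have htail : ∑ i ∈ Ioc N k, waterFill n m N P i = ∑ _i ∈ Ioc N k, tailMean n m N P :=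
    sum_congr rfl fun _ hi => if_neg (mem_Ioc.1 hi).1.not_ge
  rw [← sum_Icc_add_sum_Ioc _ hNk, sum_Icc_waterFill_of_le le_rfl, htail, sum_const,
    Nat.card_Ioc, nsmul_eq_mul, Nat.cast_sub hNk]

lemma waterFill_isPMF (hP : IsPMF n P) (hNm : N < m) (hmn : m ≤ n) :
    IsPMF m (waterFill n m N P) := by
  refine ⟨fun i hi => ?_, ?_⟩
  · unfold waterFill
    split_ifs
    · exact hP.1 i (Icc_subset_Icc_right (hNm.le.trans hmn) (mem_Icc.2 ⟨(mem_Icc.1 hi).1, ‹_›⟩))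
    · exact tailMean_pos hP hNm (hNm.trans_le hmn)
  · rw [sum_Icc_waterFill_of_ge hNm.le, sum_Icc_add_mul_tailMean hP hNm (hNm.le.trans hmn)]

lemma waterFill_decOn (hPdec : DecOn n P) (hmn : m ≤ n)
    (hhead : 1 ≤ N → tailMean n m N P ≤ P N) : DecOn m (waterFill n m N P) := by
  intro i hi j hj hij
  have hin : i ∈ Icc 1 n := Icc_subset_Icc_right hmn hi
  unfold waterFill
  split_ifs with hjN hiN hiN
  · exact hPdec i hin j (Icc_subset_Icc_right hmn hj) hij
  · omega
  · have hN : N ∈ Icc 1 n := mem_Icc.2 ⟨(mem_Icc.1 hi).1.trans hiN, by grind⟩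
    exact (hhead (mem_Icc.1 hN).1).trans (hPdec i hin N hN hiN)
  · exact le_rfl

lemma prefixLE_waterFill (hP : IsPMF n P) (hPdec : DecOn n P) (hNm : N < m) (hmn : m ≤ n)
    (htail : N + 1 < m → P (N + 1) ≤ tailMean n m N P) : PrefixLE m P (waterFill n m N P) := by
  intro k hkm
  rcases le_or_gt k N with hkN | hNk
  · rw [sum_Icc_waterFill_of_le hkN]
  rw [sum_Icc_waterFill_of_ge hNk.le]
  rcases hkm.eq_or_lt with rfl | hkm
  · rw [sum_Icc_add_mul_tailMean hP hNm (hNm.le.trans hmn)]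
    exact hP.sum_Icc_le_one hmn
  have hbound : ∑ i ∈ Ioc N k, P i ≤ ((k : ℝ) - N) * tailMean n m N P :=
    sum_Ioc_le_mul hNk.le fun i hi =>
      (hPdec (N + 1) (mem_Icc.2 ⟨by omega, by omega⟩) i
        (mem_Icc.2 ⟨by grind, by grind⟩) (mem_Ioc.1 hi).1).trans (htail (by omega))
  rw [← sum_Icc_add_sum_Ioc P hNk.le]
  linarith

lemma waterFill_prefixLE (hP : IsPMF n P) (hNm : N < m) (hmn : m ≤ n) {q : ℕ → ℝ}
    (hq : IsPMF m q) (hqdec : DecOn m q) (hPq : PrefixLE m P q) :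
    PrefixLE m (waterFill n m N P) q := by
  intro k hkm
  rcases le_or_gt k N with hkN | hNk
  · rw [sum_Icc_waterFill_of_le hkN]
    exact hPq k hkm
  rw [sum_Icc_waterFill_of_ge hNk.le]
  have hconc := sum_Icc_concave hqdec hNk.le hkm
  have hfill := sum_Icc_add_mul_tailMean hP hNm (hNm.le.trans hmn)
  have hhead := hPq N hNm.le
  rw [hq.2] at hconc
  have hmN : (0 : ℝ) < m - N := sub_pos.2 (by exact_mod_cast hNm)
  have hmk : (0 : ℝ) ≤ m - k := sub_nonneg.2 (by exact_mod_cast hkm)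
  refine le_of_mul_le_mul_left ?_ hmN
  nlinarith [mul_le_mul_of_nonneg_left hhead hmk]

end WaterFill

section TildeX

variable {n m : ℕ} {P : ℕ → ℝ}

lemma tailMean_zero (hP : IsPMF n P) : tailMean n m 0 P = 1 / m := by
  simp [tailMean, hP.2]

lemma mul_tailMean_eq_add {N : ℕ} (hP : IsPMF n P) (hNm : N + 1 < m) (hNn : N + 1 ≤ n) :
    ((m : ℝ) - N) * tailMean n m N P
      = P (N + 1) + ((m : ℝ) - (N + 1 : ℕ)) * tailMean n m (N + 1) P := by
  have hN := sum_Icc_add_mul_tailMean hP (m := m) (N := N) (by omega) (by omega)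
  have hN1 := sum_Icc_add_mul_tailMean hP hNm hNn
  rw [sum_Icc_succ_top (by omega)] at hN1
  linarith

lemma nStar_spec (hm : 2 ≤ m) (hmn : m < n) (hP : IsPMF n P) (hu : 1 / (m : ℝ) ≤ P 1) :
    nStar n m P < m ∧ tailMean n m (nStar n m P) P ≤ P (nStar n m P) ∧
      (nStar n m P + 1 < m → P (nStar n m P + 1) ≤ tailMean n m (nStar n m P) P) := by
  set S := {i : ℕ | 1 ≤ i ∧ i ≤ m - 1 ∧ tailMean n m i P ≤ P i}
  have hbdd : BddAbove S := ⟨m - 1, fun i hi => hi.2.1⟩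
  have hone : 1 ∈ S := by
    refine ⟨le_rfl, by omega, ?_⟩
    have h := sum_Icc_add_mul_tailMean hP (m := m) (N := 1) (by omega) (by omega)
    rw [Icc_self, sum_singleton] at h
    have hm1 : (1 : ℝ) < m := by exact_mod_cast hm
    rw [div_le_iff₀ (by linarith)] at hu
    push_cast at h
    nlinarith
  obtain ⟨-, hNm, hNt⟩ : nStar n m P ∈ S := Nat.sSup_mem ⟨1, hone⟩ hbdd
  set N := nStar n m P
  refine ⟨by omega, hNt, fun hN1m => ?_⟩
  have hnext : P (N + 1) < tailMean n m (N + 1) P := by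
    by_contra! h
    have : N + 1 ≤ N := le_csSup hbdd ⟨by omega, by omega, h⟩
    omega
  have hshift := mul_tailMean_eq_add hP hN1m (by omega)
  have hmN : (0 : ℝ) < m - (N + 1 : ℕ) := sub_pos.2 (by exact_mod_cast hN1m)
  push_cast at hshift hmN
  nlinarith

lemma exists_eqOn_tildeX_waterFill (hm : 2 ≤ m) (hmn : m < n) (hP : IsPMF n P) :
    ∃ N < m, (1 ≤ N → tailMean n m N P ≤ P N) ∧ (N + 1 < m → P (N + 1) ≤ tailMean n m N P) ∧
      Set.EqOn (tildeX n m P) (waterFill n m N P) (Icc 1 m) := by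
  by_cases hu : P 1 < 1 / (m : ℝ)
  · refine ⟨0, by omega, by omega, fun _ => (tailMean_zero hP).symm ▸ hu.le, fun i hi => ?_⟩
    have hi0 : ¬i ≤ 0 := by grind
    simp only [tildeX, waterFill, if_pos hu, if_neg hi0, tailMean_zero hP]
  · obtain ⟨hNm, hNt, htail⟩ := nStar_spec hm hmn hP (not_lt.1 hu)
    exact ⟨nStar n m P, hNm, fun _ => hNt, htail, fun i _ => if_neg hu⟩

end TildeX

theorem stmt11 (n m : ℕ) (hm : 2 ≤ m) (hmn : m < n)
    (P : ℕ → ℝ) (hP : IsPMF n P) (hdec : DecOn n P) :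
    ∀ α : ℝ, 0 < α →
      IsGreatest (renyiH m α '' {Q | IsPMF m Q ∧ MajorizedBy n P (padTo m Q)})
        (renyiH m α (tildeX n m P)) := by
  intro α hα
  obtain ⟨N, hNm, hhead, htail, hX⟩ := exists_eqOn_tildeX_waterFill hm hmn hP
  rw [renyiH_congr hX]
  exact isGreatest_renyiH_of_prefixLE hmn hP hdec (waterFill_isPMF hP hNm hmn.le)
    (waterFill_decOn hdec hmn.le hhead) (prefixLE_waterFill hP hdec hNm hmn.le htail)
    (fun _ hq hqdec hPq => waterFill_prefixLE hP hNm hmn.le hq hqdec hPq) hα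
end

section
/- Let n > m ≥ 2 be integers, let X be a random variable on {1,…,n} with probability mass function P_X satisfying P_X(1) ≥ … ≥ P_X(n), and let X̃_m be defined as follows: if P_X(1) < 1/m, X̃_m is uniform on {1,…,m}; otherwise P_{X̃_m}(i) = P_X(i) for i ≤ n* and P_{X̃_m}(i) = (1/(m−n*))·Σ_{j=n*+1}^{n} P_X(j) for n* < i ≤ m, where n* is the maximal integer i ∈ {1,…,m−1} with P_X(i) ≥ (1/(m−i))·Σ_{j=i+1}^{n} P_X(j). Then for every deterministic function f: {1,…,n} → {1,…,m} and every α > 0, H_α(f(X)) ≤ H_α(X̃_m). -/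
open Finset

lemma abel_aux (s D : ℕ → ℝ) (m : ℕ)
    (hs : ∀ i, 1 ≤ i → i + 1 ≤ m → s (i+1) ≤ s i)
    (hD : ∀ k, k ≤ m → 0 ≤ D k) (hD0 : D 0 = 0) :
    ∀ M, M ≤ m → s M * D M ≤ ∑ i ∈ Finset.Icc 1 M, s i * (D i - D (i-1)) := by
  intro M
  induction M with
  | zero => intro _; simp [hD0]
  | succ M ih =>
    intro hMm
    rw [Finset.sum_Icc_succ_top (by omega : 1 ≤ M + 1)]
    rcases Nat.eq_zero_or_pos M with rfl | hM1
    · simp [hD0]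
    have h1 := ih (by omega)
    have h2 := hs M hM1 hMm
    have h3 := hD M (by omega)
    rw [Nat.add_sub_cancel]
    nlinarith [mul_nonneg (sub_nonneg.mpr h2) h3]

lemma hlp_core (m : ℕ) (x q s : ℕ → ℝ) (φ : ℝ → ℝ)
    (htan : ∀ i ∈ Finset.Icc 1 m, s i * (q i - x i) ≤ φ (q i) - φ (x i))
    (hs : ∀ i, 1 ≤ i → i + 1 ≤ m → s (i+1) ≤ s i)
    (hpre : ∀ k, k ≤ m → ∑ i ∈ Finset.Icc 1 k, x i ≤ ∑ i ∈ Finset.Icc 1 k, q i)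
    (htot : ∑ i ∈ Finset.Icc 1 m, x i = ∑ i ∈ Finset.Icc 1 m, q i) :
    ∑ i ∈ Finset.Icc 1 m, φ (x i) ≤ ∑ i ∈ Finset.Icc 1 m, φ (q i) := by
  set D : ℕ → ℝ := fun k => ∑ i ∈ Finset.Icc 1 k, (q i - x i) with hDdef
  have hD0 : D 0 = 0 := by simp [hDdef]
  have hDd : ∀ i, 1 ≤ i → D i - D (i-1) = q i - x i := by
    intro i hi
    obtain ⟨j, rfl⟩ := Nat.exists_eq_add_of_le hi
    simp only [hDdef]
    rw [show 1 + j = j + 1 by ring, Finset.sum_Icc_succ_top (by omega : 1 ≤ j + 1)]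
    simp
  have hDnn : ∀ k, k ≤ m → 0 ≤ D k := by
    intro k hk
    have := hpre k hk
    simp only [hDdef, Finset.sum_sub_distrib]
    linarith
  have hDm : D m = 0 := by
    simp only [hDdef, Finset.sum_sub_distrib]
    linarith
  have key := abel_aux s D m hs hDnn hD0 m le_rfl
  rw [hDm, mul_zero] at key
  have step : ∑ i ∈ Finset.Icc 1 m, s i * (D i - D (i-1))
      = ∑ i ∈ Finset.Icc 1 m, s i * (q i - x i) := by
    apply Finset.sum_congr rfl
    intro i hi
    rw [hDd i (Finset.mem_Icc.mp hi).1]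
  rw [step] at key
  have : ∑ i ∈ Finset.Icc 1 m, s i * (q i - x i)
      ≤ ∑ i ∈ Finset.Icc 1 m, (φ (q i) - φ (x i)) := Finset.sum_le_sum htan
  rw [Finset.sum_sub_distrib] at this
  linarith

lemma rpow_helper {α x : ℝ} (hx : 0 < x) : x ^ α = x ^ (α - 1) * x := by
  rw [← Real.rpow_add_one hx.ne']; norm_num

lemma tangent_rpow_hi {α x q : ℝ} (hα : 1 ≤ α) (hx : 0 < x) (hq : 0 ≤ q) :
    x ^ α + α * x ^ (α - 1) * (q - x) ≤ q ^ α := by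
  have hs : -1 ≤ q / x - 1 := by
    have : 0 ≤ q / x := div_nonneg hq hx.le
    linarith
  have hb := one_add_mul_self_le_rpow_one_add hs hα
  rw [show (1 : ℝ) + (q / x - 1) = q / x by ring, Real.div_rpow hq hx.le] at hb
  have hxα : (0:ℝ) < x ^ α := Real.rpow_pos_of_pos hx α
  rw [le_div_iff₀ hxα] at hb
  refine le_trans (le_of_eq ?_) hb
  rw [rpow_helper hx]
  field_simp

lemma tangent_rpow_lo {α x q : ℝ} (hα0 : 0 ≤ α) (hα : α ≤ 1) (hx : 0 < x) (hq : 0 ≤ q) :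
    q ^ α ≤ x ^ α + α * x ^ (α - 1) * (q - x) := by
  have hs : -1 ≤ q / x - 1 := by
    have : 0 ≤ q / x := div_nonneg hq hx.le
    linarith
  have hb := rpow_one_add_le_one_add_mul_self hs hα0 hα
  rw [show (1 : ℝ) + (q / x - 1) = q / x by ring, Real.div_rpow hq hx.le] at hb
  have hxα : (0:ℝ) < x ^ α := Real.rpow_pos_of_pos hx α
  rw [div_le_iff₀ hxα] at hb
  refine le_trans hb (le_of_eq ?_)
  rw [rpow_helper hx]
  field_simp

lemma tangent_xlogx {x q : ℝ} (hx : 0 < x) (hq : 0 ≤ q) :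
    x * Real.log x + (Real.log x + 1) * (q - x) ≤ q * Real.log q := by
  rcases eq_or_lt_of_le hq with rfl | hq
  · have h := Real.add_one_le_exp (Real.log x)
    rw [Real.exp_log hx] at h
    simp only [Real.log_zero, zero_mul]
    nlinarith
  · have h := Real.log_le_sub_one_of_pos (div_pos hx hq)
    rw [Real.log_div hx.ne' hq.ne'] at h
    have h2 : q * (Real.log x - Real.log q) ≤ q * (x / q - 1) :=
      mul_le_mul_of_nonneg_left h hq.le
    have h3 : q * (x / q - 1) = x - q := by field_simp
    rw [h3] at h2
    nlinarith

lemma icc_sum_eq_fin (m : ℕ) (h : ℕ → ℝ) :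
    ∑ k ∈ Finset.Icc 1 m, h k = ∑ i : Fin m, h ((i : ℕ) + 1) := by
  rw [Fin.sum_univ_eq_sum_range (fun i => h (i + 1)) m]
  rw [show Finset.Icc 1 m = Finset.Ico 1 (m + 1) by rfl, Finset.sum_Ico_eq_sum_range]
  simp only [Nat.add_sub_cancel]
  exact Finset.sum_congr rfl (fun i _ => by rw [Nat.add_comm])

lemma exists_sorted (m : ℕ) (Q : ℕ → ℝ) (hQ : ∀ j ∈ Finset.Icc 1 m, 0 ≤ Q j) :
    ∃ q : ℕ → ℝ,
      (∀ i ∈ Finset.Icc 1 m, ∀ j ∈ Finset.Icc 1 m, i ≤ j → q j ≤ q i) ∧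
      (∀ i ∈ Finset.Icc 1 m, 0 ≤ q i) ∧
      (∀ φ : ℝ → ℝ, ∑ i ∈ Finset.Icc 1 m, φ (q i) = ∑ j ∈ Finset.Icc 1 m, φ (Q j)) ∧
      (∀ S : Finset ℕ, S ⊆ Finset.Icc 1 m →
        ∑ j ∈ S, Q j ≤ ∑ i ∈ Finset.Icc 1 (S.card), q i) := by
  classical
  set g : Fin m → ℝ := fun i => -Q ((i : ℕ) + 1) with hg
  set σ : Equiv.Perm (Fin m) := Tuple.sort g with hσ
  have hmono : Monotone (g ∘ σ) := Tuple.monotone_sort g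
  set qF : Fin m → ℝ := fun i => Q ((σ i : ℕ) + 1) with hqF
  have hqFanti : ∀ a b : Fin m, a ≤ b → qF b ≤ qF a := by
    intro a b hab
    have := hmono hab
    simp only [Function.comp, hg] at this
    simp only [hqF]; linarith
  have hmem : ∀ i : Fin m, ((σ i : ℕ) + 1) ∈ Finset.Icc 1 m := by
    intro i; simp [Finset.mem_Icc]
  have hqFnn : ∀ i : Fin m, 0 ≤ qF i := fun i => hQ _ (hmem i)
  set q : ℕ → ℝ := fun k => if h : k ∈ Finset.Icc 1 m then
    qF ⟨k - 1, by simp [Finset.mem_Icc] at h; omega⟩ else 0 with hqdef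
  have hqval : ∀ k (h : k ∈ Finset.Icc 1 m), q k = qF ⟨k - 1, by
      simp [Finset.mem_Icc] at h; omega⟩ := by
    intro k h; exact dif_pos h
  refine ⟨q, ?_, ?_, ?_, ?_⟩
  · intro i hi j hj hij
    rw [hqval i hi, hqval j hj]
    apply hqFanti
    simp only [Fin.mk_le_mk]
    omega
  · intro i hi; rw [hqval i hi]; exact hqFnn _
  · intro φ
    rw [icc_sum_eq_fin m (fun k => φ (q k)), icc_sum_eq_fin m (fun k => φ (Q k))]
    have h1 : ∀ i : Fin m, φ (q ((i : ℕ) + 1)) = φ (qF i) := by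
      intro i
      have hmem' : (i : ℕ) + 1 ∈ Finset.Icc 1 m := by simp [Finset.mem_Icc]
      rw [hqval _ hmem']
      have hv : (⟨(i : ℕ) + 1 - 1, by omega⟩ : Fin m) = i := Fin.ext (by simp)
      rw [hv]
    rw [Finset.sum_congr rfl (fun i _ => h1 i)]
    have := Equiv.sum_comp σ (fun i : Fin m => φ (Q ((i : ℕ) + 1)))
    simpa [hqF] using this
  · intro S hS
    set r := S.card with hr
    have hrm : r ≤ m := by
      have := Finset.card_le_card hS
      simpa [Nat.card_Icc] using this
    set e : Fin m → ℕ := fun t => (σ t : ℕ) + 1 with he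
    have heinj : Function.Injective e := by
      intro a b hab
      apply σ.injective
      apply Fin.ext
      simp only [he] at hab
      omega
    set T : Finset (Fin m) := Finset.univ.filter (fun t => e t ∈ S) with hT
    have hSim : S = T.image e := by
      ext j
      simp only [Finset.mem_image, hT, Finset.mem_filter, Finset.mem_univ, true_and]
      constructor
      · intro hj
        have hj' := hS hj
        simp [Finset.mem_Icc] at hj'
        refine ⟨σ.symm ⟨j - 1, by omega⟩, ?_, ?_⟩
        · simp only [he, Equiv.apply_symm_apply]
          have : j - 1 + 1 = j := by omega
          rw [this]; exact hj
        · simp only [he, Equiv.apply_symm_apply]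
          omega
      · rintro ⟨t, ht, rfl⟩
        exact ht
    have hsum1 : ∑ j ∈ S, Q j = ∑ t ∈ T, qF t := by
      rw [hSim, Finset.sum_image (fun a _ b _ h => heinj h)]
    have hcard : T.card = r := by
      rw [hr, hSim, Finset.card_image_of_injective T heinj]
    set emb := T.orderEmbOfFin hcard with hemb
    have hTmap : T = Finset.univ.map emb.toEmbedding := by
      ext t
      simp only [Finset.mem_map, Finset.mem_univ, true_and]
      constructor
      · intro ht
        have : t ∈ Set.range emb := by
          rw [Finset.range_orderEmbOfFin]; exact ht
        obtain ⟨i, hi⟩ := this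
        exact ⟨i, hi⟩
      · rintro ⟨i, rfl⟩
        exact Finset.orderEmbOfFin_mem T hcard i
    have hsum2 : ∑ t ∈ T, qF t = ∑ i : Fin r, qF (emb i) := by
      rw [hTmap, Finset.sum_map]; rfl
    have hle : ∀ v : ℕ, ∀ hv : v < r, v ≤ (emb ⟨v, hv⟩ : ℕ) := by
      intro v
      induction v with
      | zero => intro hv; omega
      | succ w ih =>
        intro hv
        have h1 := ih (by omega)
        have h2 : emb ⟨w, by omega⟩ < emb ⟨w + 1, hv⟩ :=
          emb.strictMono (by simp [Fin.lt_def])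
        have h3 : (emb ⟨w, by omega⟩ : ℕ) < (emb ⟨w + 1, hv⟩ : ℕ) := h2
        omega
    have hsum3 : ∑ i : Fin r, qF (emb i) ≤ ∑ i : Fin r, qF ⟨(i : ℕ), lt_of_lt_of_le i.2 hrm⟩ := by
      apply Finset.sum_le_sum
      intro i _
      apply hqFanti
      simp only [Fin.le_def]
      exact hle i i.2
    have hsum4 : ∑ i ∈ Finset.Icc 1 r, q i
        = ∑ i : Fin r, qF ⟨(i : ℕ), lt_of_lt_of_le i.2 hrm⟩ := by
      rw [icc_sum_eq_fin r q]
      apply Finset.sum_congr rfl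
      intro i _
      have hmem' : (i : ℕ) + 1 ∈ Finset.Icc 1 m := by
        simp [Finset.mem_Icc]; omega
      rw [hqval _ hmem']
      have hv : (⟨(i : ℕ) + 1 - 1, by omega⟩ : Fin m) = (⟨(i : ℕ), lt_of_lt_of_le i.2 hrm⟩ : Fin m) := Fin.ext (by simp)
      rw [hv]
    rw [hsum1, hsum2, hsum4]
    exact hsum3

lemma icc_split (a k : ℕ) (h : a ≤ k) (f : ℕ → ℝ) :
    ∑ i ∈ Finset.Icc 1 k, f i = ∑ i ∈ Finset.Icc 1 a, f i + ∑ i ∈ Finset.Icc (a+1) k, f i := by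
  have h0 : ∀ t : ℕ, Finset.Icc 1 t = Finset.Ioc 0 t := by
    intro t; ext z; simp [Finset.mem_Icc, Finset.mem_Ioc]; omega
  have h1 : Finset.Icc (a+1) k = Finset.Ioc a k := Finset.Icc_add_one_left_eq_Ioc a k
  rw [h0 k, h0 a, h1]
  exact (Finset.sum_Ioc_consecutive f (Nat.zero_le a) h).symm

lemma prefix_le (m a : ℕ) (b : ℝ) (x q : ℕ → ℝ)
    (ham : a < m)
    (hq_anti : ∀ i ∈ Finset.Icc 1 m, ∀ j ∈ Finset.Icc 1 m, i ≤ j → q j ≤ q i)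
    (hxb : ∀ i, a < i → i ≤ m → x i = b)
    (hpre_a : ∀ k, k ≤ a → ∑ i ∈ Finset.Icc 1 k, x i ≤ ∑ i ∈ Finset.Icc 1 k, q i)
    (hxtot : ∑ i ∈ Finset.Icc 1 m, x i = 1)
    (hqtot : ∑ i ∈ Finset.Icc 1 m, q i = 1) :
    ∀ k, k ≤ m → ∑ i ∈ Finset.Icc 1 k, x i ≤ ∑ i ∈ Finset.Icc 1 k, q i := by
  intro k hkm
  rcases le_or_gt k a with hka | hak
  · exact hpre_a k hka
  -- a < k ≤ m
  have hk1 : 1 ≤ k := by omega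
  have hxk : ∑ i ∈ Finset.Icc 1 k, x i
      = ∑ i ∈ Finset.Icc 1 a, x i + ((k : ℝ) - a) * b := by
    rw [icc_split a k (by omega) x]
    congr 1
    rw [Finset.sum_congr rfl (fun i hi => by
      simp only [Finset.mem_Icc] at hi
      exact hxb i (by omega) (by omega))]
    have hc : ((k + 1 - (a + 1) : ℕ) : ℝ) = (k : ℝ) - a := by
      have h2 : k + 1 - (a + 1) = k - a := by omega
      rw [h2]
      push_cast [Nat.cast_sub (by omega : a ≤ k)]
      ring
    rw [Finset.sum_const, nsmul_eq_mul, Nat.card_Icc, hc, mul_comm]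
  have hxm : (1 : ℝ) = ∑ i ∈ Finset.Icc 1 a, x i + ((m : ℝ) - a) * b := by
    rw [← hxtot, icc_split a m (by omega) x]
    congr 1
    rw [Finset.sum_congr rfl (fun i hi => by
      simp only [Finset.mem_Icc] at hi
      exact hxb i (by omega) (by omega))]
    have hc : ((m + 1 - (a + 1) : ℕ) : ℝ) = (m : ℝ) - a := by
      have h2 : m + 1 - (a + 1) = m - a := by omega
      rw [h2]
      push_cast [Nat.cast_sub (by omega : a ≤ m)]
      ring
    rw [Finset.sum_const, nsmul_eq_mul, Nat.card_Icc, hc, mul_comm]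
  have hQa := hpre_a a le_rfl
  have hkmem : k ∈ Finset.Icc 1 m := by simp [Finset.mem_Icc]; omega
  rcases le_or_gt b (q k) with hb | hb
  · -- q k ≥ b
    have hsplit := icc_split a k (by omega) q
    have hlow : ((k : ℝ) - a) * q k ≤ ∑ i ∈ Finset.Icc (a+1) k, q i := by
      have h1 : ∑ i ∈ Finset.Icc (a+1) k, q k ≤ ∑ i ∈ Finset.Icc (a+1) k, q i := by
        apply Finset.sum_le_sum
        intro i hi
        simp only [Finset.mem_Icc] at hi
        exact hq_anti i (by simp [Finset.mem_Icc]; omega) k hkmem (by omega)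
      have hc : ((k + 1 - (a + 1) : ℕ) : ℝ) = (k : ℝ) - a := by
        have h2 : k + 1 - (a + 1) = k - a := by omega
        rw [h2]
        push_cast [Nat.cast_sub (by omega : a ≤ k)]
        ring
      rw [Finset.sum_const, nsmul_eq_mul, Nat.card_Icc, hc] at h1
      exact h1
    have hka' : (0:ℝ) ≤ (k : ℝ) - a := by
      have : (a : ℝ) ≤ k := by exact_mod_cast (by omega : a ≤ k)
      linarith
    rw [hxk, hsplit]
    have : ((k : ℝ) - a) * b ≤ ((k : ℝ) - a) * q k := mul_le_mul_of_nonneg_left hb hka'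
    linarith
  · -- q k < b
    have hsplit := icc_split k m hkm q
    have hupp : ∑ i ∈ Finset.Icc (k+1) m, q i ≤ ((m : ℝ) - k) * q k := by
      have h1 : ∑ i ∈ Finset.Icc (k+1) m, q i ≤ ∑ i ∈ Finset.Icc (k+1) m, q k := by
        apply Finset.sum_le_sum
        intro i hi
        simp only [Finset.mem_Icc] at hi
        exact hq_anti k hkmem i (by simp [Finset.mem_Icc]; omega) (by omega)
      have hc : ((m + 1 - (k + 1) : ℕ) : ℝ) = (m : ℝ) - k := by
        have h2 : m + 1 - (k + 1) = m - k := by omega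
        rw [h2]
        push_cast [Nat.cast_sub hkm]
        ring
      rw [Finset.sum_const, nsmul_eq_mul, Nat.card_Icc, hc] at h1
      exact h1
    have hmk' : (0:ℝ) ≤ (m : ℝ) - k := by
      have : (k : ℝ) ≤ m := by exact_mod_cast hkm
      linarith
    have h2 : ((m : ℝ) - k) * q k ≤ ((m : ℝ) - k) * b := mul_le_mul_of_nonneg_left hb.le hmk'
    rw [hqtot] at hsplit
    rw [hxk]
    have hak' : (a : ℝ) ≤ k := by exact_mod_cast (by omega : a ≤ k)
    have hkm' : (k : ℝ) ≤ m := by exact_mod_cast hkm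
    nlinarith [hsplit, hupp, h2, hxm]

theorem stmt12 (n m : ℕ) (hm : 2 ≤ m) (hmn : m < n)
    (P : ℕ → ℝ) (hP : IsPMF n P) (hdec : DecOn n P)
    (f : ℕ → ℕ) (hf : ∀ i ∈ Finset.Icc 1 n, f i ∈ Finset.Icc 1 m) :
    ∀ α : ℝ, 0 < α → renyiH m α (push n f P) ≤ renyiH m α (tildeX n m P) := by
  intro α hα
  obtain ⟨hPpos, hPsum⟩ := hP
  have hm0 : (0:ℝ) < m := by positivity
  have hm1 : (1:ℝ) < m := by exact_mod_cast hm.trans_lt' one_lt_two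
  set Q := push n f P with hQdef
  have hQnn : ∀ j, 0 ≤ Q j := by
    intro j
    apply Finset.sum_nonneg
    intro i hi
    exact (hPpos i (Finset.mem_filter.mp hi).1).le
  have hQtot : ∑ j ∈ Finset.Icc 1 m, Q j = 1 := by
    rw [hQdef]
    show ∑ j ∈ Finset.Icc 1 m, ∑ i ∈ (Finset.Icc 1 n).filter (fun i => f i = j), P i = 1
    rw [Finset.sum_fiberwise_of_maps_to hf P]
    exact hPsum
  have hcover : ∀ k, k ≤ m → ∃ S : Finset ℕ, S ⊆ Finset.Icc 1 m ∧ S.card ≤ k ∧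
      ∑ i ∈ Finset.Icc 1 k, P i ≤ ∑ j ∈ S, Q j := by
    intro k hk
    refine ⟨(Finset.Icc 1 k).image f, ?_, ?_, ?_⟩
    · intro j hj
      obtain ⟨i, hi, rfl⟩ := Finset.mem_image.mp hj
      apply hf
      simp only [Finset.mem_Icc] at hi ⊢
      omega
    · calc ((Finset.Icc 1 k).image f).card ≤ (Finset.Icc 1 k).card := Finset.card_image_le
        _ = k := by rw [Nat.card_Icc]; omega
    · have h1 : ∑ j ∈ (Finset.Icc 1 k).image f, Q j
          = ∑ i ∈ (Finset.Icc 1 n).filter (fun i => f i ∈ (Finset.Icc 1 k).image f), P i :=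
        Finset.sum_fiberwise_eq_sum_filter _ _ _ _
      rw [h1]
      apply Finset.sum_le_sum_of_subset_of_nonneg
      · intro i hi
        simp only [Finset.mem_Icc] at hi
        simp only [Finset.mem_filter, Finset.mem_Icc]
        refine ⟨⟨hi.1, by omega⟩, ?_⟩
        apply Finset.mem_image_of_mem
        simp [Finset.mem_Icc]; omega
      · intro i hi _
        exact (hPpos i (Finset.mem_filter.mp hi).1).le
  obtain ⟨q, hq_anti, hq_nn, hphi, htop⟩ := exists_sorted m Q (fun j _ => hQnn j)
  have hqtot : ∑ i ∈ Finset.Icc 1 m, q i = 1 := by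
    have := hphi (fun t => t)
    simpa using this.trans hQtot
  set x := tildeX n m P with hxdef
  -- The four key facts about x
  have hxfacts : (∀ i ∈ Finset.Icc 1 m, 0 < x i) ∧
      (∀ i ∈ Finset.Icc 1 m, ∀ j ∈ Finset.Icc 1 m, i ≤ j → x j ≤ x i) ∧
      (∑ i ∈ Finset.Icc 1 m, x i = 1) ∧
      (∀ k, k ≤ m → ∑ i ∈ Finset.Icc 1 k, x i ≤ ∑ i ∈ Finset.Icc 1 k, q i) := by
    by_cases h1 : P 1 < 1 / (m : ℝ)
    · have hxc : ∀ i, x i = 1 / (m : ℝ) := by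
        intro i
        show tildeX n m P i = 1 / (m : ℝ)
        simp only [tildeX]
        rw [if_pos h1]
      have hxtot : ∑ i ∈ Finset.Icc 1 m, x i = 1 := by
        rw [Finset.sum_congr rfl (fun i _ => hxc i), Finset.sum_const, Nat.card_Icc,
          nsmul_eq_mul]
        have : ((m + 1 - 1 : ℕ) : ℝ) = (m : ℝ) := by norm_num
        rw [this]
        field_simp
      refine ⟨?_, ?_, hxtot, ?_⟩
      · intro i _; rw [hxc i]; positivity
      · intro i _ j _ _; rw [hxc i, hxc j]
      · apply prefix_le m 0 (1 / (m : ℝ)) x q (by omega) hq_anti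
          (fun i _ _ => hxc i) ?_ hxtot hqtot
        intro k hk
        interval_cases k
        simp
    · -- P 1 ≥ 1/m
      set St := {i : ℕ | 1 ≤ i ∧ i ≤ m - 1 ∧
        ((m : ℝ) - (i : ℝ))⁻¹ * ∑ j ∈ Finset.Icc (i + 1) n, P j ≤ P i} with hSt
      have h1' : 1 / (m : ℝ) ≤ P 1 := not_lt.mp h1
      have hone : (1 : ℕ) ∈ St := by
        refine ⟨le_rfl, by omega, ?_⟩
        have hsplit : ∑ i ∈ Finset.Icc 1 n, P i
            = ∑ i ∈ Finset.Icc 1 1, P i + ∑ i ∈ Finset.Icc 2 n, P i :=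
          icc_split 1 n (by omega) P
        rw [Finset.Icc_self, Finset.sum_singleton] at hsplit
        rw [hPsum] at hsplit
        have hT1 : ∑ j ∈ Finset.Icc (1 + 1) n, P j = 1 - P 1 := by
          norm_num; linarith
        rw [hT1]
        rw [inv_mul_le_iff₀ (by push_cast; linarith)]
        have : 1 ≤ (m : ℝ) * P 1 := by
          have h2 := mul_le_mul_of_nonneg_left h1' hm0.le
          rw [mul_one_div, div_self hm0.ne'] at h2
          linarith
        push_cast
        nlinarith
      have hbdd : BddAbove St := ⟨m - 1, fun i hi => hi.2.1⟩
      have hns_mem : nStar n m P ∈ St := Nat.sSup_mem ⟨1, hone⟩ hbdd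
      set ns := nStar n m P with hnsdef
      obtain ⟨hns1, hns2, hns3⟩ := hns_mem
      set T := ∑ j ∈ Finset.Icc (ns + 1) n, P j with hT
      set β := ((m : ℝ) - (ns : ℝ))⁻¹ * T with hβ
      have hnsm : ns < m := by omega
      have hmns : (0:ℝ) < (m : ℝ) - ns := by
        have : (ns : ℝ) < m := by exact_mod_cast hnsm
        linarith
      have hTpos : 0 < T := by
        apply Finset.sum_pos
        · intro i hi
          simp only [Finset.mem_Icc] at hi
          exact hPpos i (by simp [Finset.mem_Icc]; omega)
        · refine ⟨ns + 1, ?_⟩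
          simp [Finset.mem_Icc]; omega
      have hβpos : 0 < β := mul_pos (inv_pos.mpr hmns) hTpos
      have hxval : ∀ i, x i = if i ≤ ns then P i else β := by
        intro i
        show tildeX n m P i = if i ≤ ns then P i else β
        simp only [tildeX]
        rw [if_neg h1]
      have hβle : β ≤ P ns := hns3
      have hxlow : ∀ i, ns < i → i ≤ m → x i = β := by
        intro i hi _; rw [hxval i, if_neg (by omega)]
      have hconst : ∑ i ∈ Finset.Icc (ns+1) m, x i = ((m:ℝ) - ns) * β := by
        rw [Finset.sum_congr rfl (fun i hi => by
          simp only [Finset.mem_Icc] at hi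
          exact hxlow i (by omega) hi.2)]
        rw [Finset.sum_const, nsmul_eq_mul, Nat.card_Icc]
        congr 1
        have h2 : m + 1 - (ns + 1) = m - ns := by omega
        rw [h2]
        push_cast [Nat.cast_sub (by omega : ns ≤ m)]
        ring
      have hhead : ∀ k, k ≤ ns → ∑ i ∈ Finset.Icc 1 k, x i = ∑ i ∈ Finset.Icc 1 k, P i := by
        intro k hk
        apply Finset.sum_congr rfl
        intro i hi
        simp only [Finset.mem_Icc] at hi
        rw [hxval i, if_pos (by omega)]
      have hxtot : ∑ i ∈ Finset.Icc 1 m, x i = 1 := by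
        rw [icc_split ns m (by omega) x, hconst, hhead ns le_rfl]
        have h2 : ((m:ℝ) - ns) * β = T := by
          rw [hβ]; field_simp
        rw [h2]
        rw [← hPsum, icc_split ns n (by omega) P]
      refine ⟨?_, ?_, hxtot, ?_⟩
      · intro i hi
        simp only [Finset.mem_Icc] at hi
        rw [hxval i]
        split_ifs with h
        · exact hPpos i (by simp [Finset.mem_Icc]; omega)
        · exact hβpos
      · intro i hi j hj hij
        simp only [Finset.mem_Icc] at hi hj
        rw [hxval i, hxval j]
        have hPanti : ∀ a b : ℕ, 1 ≤ a → a ≤ b → b ≤ n → P b ≤ P a := by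
          intro a b ha hab hbn
          exact hdec a (by simp [Finset.mem_Icc]; omega) b (by simp [Finset.mem_Icc]; omega) hab
        split_ifs with hj' hi' hi'
        · exact hPanti i j hi.1 hij (by omega)
        · omega
        · calc β ≤ P ns := hβle
            _ ≤ P i := hPanti i ns hi.1 hi' (by omega)
        · exact le_rfl
      · apply prefix_le m ns β x q hnsm hq_anti hxlow ?_ hxtot hqtot
        intro k hk
        rw [hhead k hk]
        obtain ⟨S, hS1, hS2, hS3⟩ := hcover k (by omega)
        calc ∑ i ∈ Finset.Icc 1 k, P i ≤ ∑ j ∈ S, Q j := hS3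
          _ ≤ ∑ i ∈ Finset.Icc 1 (S.card), q i := htop S hS1
          _ ≤ ∑ i ∈ Finset.Icc 1 k, q i := by
            apply Finset.sum_le_sum_of_subset_of_nonneg
            · exact Finset.Icc_subset_Icc_right hS2
            · intro i hi _
              apply hq_nn
              simp only [Finset.mem_Icc] at hi ⊢
              omega
  obtain ⟨hxpos, hxanti, hxtot, hxpre⟩ := hxfacts
  have hQpos_ex : ∃ j ∈ Finset.Icc 1 m, 0 < Q j := by
    by_contra hc
    push_neg at hc
    have : ∑ j ∈ Finset.Icc 1 m, Q j ≤ 0 := Finset.sum_nonpos (fun j hj => hc j hj)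
    linarith
  have hmem_succ : ∀ i : ℕ, 1 ≤ i → i + 1 ≤ m →
      i ∈ Finset.Icc 1 m ∧ i + 1 ∈ Finset.Icc 1 m := by
    intro i h1 h2
    constructor <;> simp [Finset.mem_Icc] <;> omega
  have hIccne : (Finset.Icc 1 m).Nonempty := Finset.nonempty_Icc.mpr (by omega)
  rcases lt_trichotomy α 1 with hα1 | hα1 | hα1
  · -- 0 < α < 1
    have hkey : ∑ i ∈ Finset.Icc 1 m, (-(x i ^ α)) ≤ ∑ i ∈ Finset.Icc 1 m, (-(q i ^ α)) := by
      apply hlp_core m x q (fun i => -(α * x i ^ (α - 1))) (fun t => -(t ^ α)) ?_ ?_ hxpre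
        (by rw [hxtot, hqtot])
      · intro i hi
        have ht := tangent_rpow_lo hα.le hα1.le (hxpos i hi) (hq_nn i hi)
        nlinarith [ht]
      · intro i h1 h2
        obtain ⟨hi1, hi2⟩ := hmem_succ i h1 h2
        have hxx : x (i + 1) ≤ x i := hxanti i hi1 (i + 1) hi2 (by omega)
        have hr : x i ^ (α - 1) ≤ x (i + 1) ^ (α - 1) :=
          Real.rpow_le_rpow_of_nonpos (hxpos (i + 1) hi2) hxx (by linarith)
        simp only [neg_le_neg_iff]
        exact mul_le_mul_of_nonneg_left hr hα.le
    rw [hphi (fun t => -(t ^ α))] at hkey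
    rw [Finset.sum_neg_distrib, Finset.sum_neg_distrib, neg_le_neg_iff] at hkey
    have hQαpos : 0 < ∑ j ∈ Finset.Icc 1 m, Q j ^ α := by
      obtain ⟨j, hj, hQj⟩ := hQpos_ex
      apply Finset.sum_pos' (fun i _ => Real.rpow_nonneg (hQnn i) α)
      exact ⟨j, hj, Real.rpow_pos_of_pos hQj α⟩
    have hney : α ≠ 1 := ne_of_lt hα1
    simp only [renyiH, if_neg hney]
    apply mul_le_mul_of_nonneg_left (Real.log_le_log hQαpos hkey)
    rw [inv_nonneg]
    linarith
  · -- α = 1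
    subst hα1
    have hkey : ∑ i ∈ Finset.Icc 1 m, (x i * Real.log (x i))
        ≤ ∑ i ∈ Finset.Icc 1 m, (q i * Real.log (q i)) := by
      apply hlp_core m x q (fun i => Real.log (x i) + 1) (fun t => t * Real.log t) ?_ ?_ hxpre
        (by rw [hxtot, hqtot])
      · intro i hi
        have ht := tangent_xlogx (hxpos i hi) (hq_nn i hi)
        nlinarith [ht]
      · intro i h1 h2
        obtain ⟨hi1, hi2⟩ := hmem_succ i h1 h2
        have hxx : x (i + 1) ≤ x i := hxanti i hi1 (i + 1) hi2 (by omega)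
        have := Real.log_le_log (hxpos (i + 1) hi2) hxx
        show Real.log (x (i + 1)) + 1 ≤ Real.log (x i) + 1
        linarith
    rw [hphi (fun t => t * Real.log t)] at hkey
    have e1 : renyiH m 1 Q = -∑ i ∈ Finset.Icc 1 m, Q i * Real.log (Q i) := by
      simp [renyiH]
    have e2 : renyiH m 1 x = -∑ i ∈ Finset.Icc 1 m, x i * Real.log (x i) := by
      simp [renyiH]
    rw [e1, e2]
    linarith
  · -- α > 1
    have hkey : ∑ i ∈ Finset.Icc 1 m, x i ^ α ≤ ∑ i ∈ Finset.Icc 1 m, q i ^ α := by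
      apply hlp_core m x q (fun i => α * x i ^ (α - 1)) (fun t => t ^ α) ?_ ?_ hxpre
        (by rw [hxtot, hqtot])
      · intro i hi
        have ht := tangent_rpow_hi hα1.le (hxpos i hi) (hq_nn i hi)
        nlinarith [ht]
      · intro i h1 h2
        obtain ⟨hi1, hi2⟩ := hmem_succ i h1 h2
        have hxx : x (i + 1) ≤ x i := hxanti i hi1 (i + 1) hi2 (by omega)
        have hr : x (i + 1) ^ (α - 1) ≤ x i ^ (α - 1) :=
          Real.rpow_le_rpow (hxpos (i + 1) hi2).le hxx (by linarith)
        exact mul_le_mul_of_nonneg_left hr hα.le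
    rw [hphi (fun t => t ^ α)] at hkey
    have hxαpos : 0 < ∑ i ∈ Finset.Icc 1 m, x i ^ α :=
      Finset.sum_pos (fun i hi => Real.rpow_pos_of_pos (hxpos i hi) α) hIccne
    have hney : α ≠ 1 := ne_of_gt hα1
    simp only [renyiH, if_neg hney]
    apply mul_le_mul_of_nonpos_left (Real.log_le_log hxαpos hkey)
    simp only [inv_nonpos]
    linarith
end

section
/- Let m ≥ 2 be an integer, let Q be a probability mass function on {1,…,m} with Q(1) ≥ Q(2) ≥ … ≥ Q(m) > 0, and let i ∈ {0,…,m−1} be such that Q(i+1) ≤ 2·Q(m). Let S := Σ_{j=i+1}^{m} Q(j) and let Q* be the probability mass function with Q*(j) = Q(j) for j ∈ {1,…,i} and Q*(j) = S/(m−i) for j ∈ {i+1,…,m}. Define v(α) := log((α−1)/(2^α−2)) − (α/(α−1))·log(α/(2^α−1)) for α ∈ (0,1)∪(1,∞), and v(1) := log(2/(e·log 2)). Then for every α > 0, H_α(Q) ≥ H_α(Q*) − v(α). -/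
open Finset

/-!
On the tail `{i+1,…,m}` all masses lie in `[Q m, 2 Q m]`, so by convexity of `x ↦ x ^ α`
(concavity for `α < 1`, and `x ↦ x log x` for `α = 1`) each term of the tail power sum is
bounded by the chord over `[1, 2]` after rescaling by `Q m`. Summing, the tail power sum of `Q`
is bounded by an affine function of `σ = (S / (m - i)) / Q m`, and that affine function is
`exp ((α - 1) v(α))` times a tangent line of `σ ^ α`; hence it is dominated by
`exp ((α - 1) v(α))` times the tail power sum of `Q*`. The heads of `Q` and `Q*` agree and
`v ≥ 0`, so taking logarithms gives the bound.
-/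

open Real

lemma ConvexOn.sub_mul_le_chord {s : Set ℝ} {f : ℝ → ℝ} (hf : ConvexOn ℝ s f) {a b x : ℝ}
    (ha : a ∈ s) (hb : b ∈ s) (hab : a < b) (hx : x ∈ Set.Icc a b) :
    (b - a) * f x ≤ (b - x) * f a + (x - a) * f b := by
  have hba : 0 < b - a := sub_pos.2 hab
  have key := hf.2 ha hb (div_nonneg (sub_nonneg.2 hx.2) hba.le)
    (div_nonneg (sub_nonneg.2 hx.1) hba.le)
    (by rw [← add_div, div_eq_one_iff_eq hba.ne']; ring)
  have hpt : (b - x) / (b - a) * a + (x - a) / (b - a) * b = x := by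
    field_simp; ring
  simp only [smul_eq_mul, hpt] at key
  calc (b - a) * f x ≤ (b - a) * ((b - x) / (b - a) * f a + (x - a) / (b - a) * f b) := by gcongr
    _ = (b - x) * f a + (x - a) * f b := by field_simp

lemma ConcaveOn.chord_le_sub_mul {s : Set ℝ} {f : ℝ → ℝ} (hf : ConcaveOn ℝ s f) {a b x : ℝ}
    (ha : a ∈ s) (hb : b ∈ s) (hab : a < b) (hx : x ∈ Set.Icc a b) :
    (b - x) * f a + (x - a) * f b ≤ (b - a) * f x := by
  have := hf.neg.sub_mul_le_chord ha hb hab hx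
  simp only [Pi.neg_apply] at this
  linarith

lemma rpow_le_chord_one_two {α x : ℝ} (hα : 1 ≤ α) (hx : x ∈ Set.Icc 1 2) :
    x ^ α ≤ (2 ^ α - 1) * x - (2 ^ α - 2) := by
  have := (convexOn_rpow hα).sub_mul_le_chord (a := 1) (b := 2) (by norm_num) (by norm_num)
    one_lt_two hx
  simp only [one_rpow] at this
  linarith

lemma chord_one_two_le_rpow {α x : ℝ} (hα₀ : 0 ≤ α) (hα₁ : α ≤ 1) (hx : x ∈ Set.Icc 1 2) :
    (2 ^ α - 1) * x - (2 ^ α - 2) ≤ x ^ α := by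
  have := (concaveOn_rpow hα₀ hα₁).chord_le_sub_mul (a := 1) (b := 2) (by norm_num)
    (by norm_num) one_lt_two hx
  simp only [one_rpow] at this
  linarith

lemma mul_log_le_chord_one_two {x : ℝ} (hx : x ∈ Set.Icc 1 2) :
    x * log x ≤ 2 * log 2 * (x - 1) := by
  have := convexOn_mul_log.sub_mul_le_chord (a := 1) (b := 2) (by norm_num) (by norm_num)
    one_lt_two hx
  simp only [log_one, mul_zero] at this
  linarith

lemma rpow_tangent_le {α x₀ x : ℝ} (hα : 1 ≤ α) (hx₀ : 0 < x₀) (hx : 0 ≤ x) :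
    x₀ ^ α + α * x₀ ^ (α - 1) * (x - x₀) ≤ x ^ α := by
  have hb := one_add_mul_self_le_rpow_one_add (s := x / x₀ - 1)
    (by linarith [div_nonneg hx hx₀.le]) hα
  rw [add_sub_cancel, div_rpow hx hx₀.le, le_div_iff₀ (rpow_pos_of_pos hx₀ α)] at hb
  calc x₀ ^ α + α * x₀ ^ (α - 1) * (x - x₀) = (1 + α * (x / x₀ - 1)) * x₀ ^ α := by
        rw [rpow_sub_one hx₀.ne']; field_simp
    _ ≤ x ^ α := hb

lemma rpow_le_tangent {α x₀ x : ℝ} (hα₀ : 0 ≤ α) (hα₁ : α ≤ 1) (hx₀ : 0 < x₀) (hx : 0 ≤ x) :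
    x ^ α ≤ x₀ ^ α + α * x₀ ^ (α - 1) * (x - x₀) := by
  have hb := rpow_one_add_le_one_add_mul_self (s := x / x₀ - 1)
    (by linarith [div_nonneg hx hx₀.le]) hα₀ hα₁
  rw [add_sub_cancel, div_rpow hx hx₀.le, div_le_iff₀ (rpow_pos_of_pos hx₀ α)] at hb
  calc x ^ α ≤ (1 + α * (x / x₀ - 1)) * x₀ ^ α := hb
    _ = x₀ ^ α + α * x₀ ^ (α - 1) * (x - x₀) := by
        rw [rpow_sub_one hx₀.ne']; field_simp

/-- `v(α)` is exactly what makes the chord line `(2 ^ α - 1) σ - (2 ^ α - 2)` tangent to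
`exp ((α - 1) v(α)) σ ^ α`; the point of tangency is `σ₀ = α (2 ^ α - 2) / ((α - 1) (2 ^ α - 1))`. -/
lemma exists_tangent_exp_mul_vFun {α : ℝ} (hα₀ : 0 < α) (hα₁ : α ≠ 1) :
    ∃ σ₀ > 0, ∀ σ : ℝ, exp ((α - 1) * vFun α) * (σ₀ ^ α + α * σ₀ ^ (α - 1) * (σ - σ₀))
      = (2 ^ α - 1) * σ - (2 ^ α - 2) := by
  set r := (α - 1) / ((2 : ℝ) ^ α - 2) with hr_def
  set s := α / ((2 : ℝ) ^ α - 1) with hs_def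
  have hc : 0 < (2 : ℝ) ^ α - 1 := by linarith [one_lt_rpow one_lt_two hα₀]
  have hr : 0 < r := by
    rcases hα₁.lt_or_gt with h | h
    · have : (2 : ℝ) ^ α < 2 ^ (1 : ℝ) := rpow_lt_rpow_of_exponent_lt one_lt_two h
      exact div_pos_of_neg_of_neg (by linarith) (by linarith [rpow_one (2 : ℝ)])
    · have : (2 : ℝ) ^ (1 : ℝ) < 2 ^ α := rpow_lt_rpow_of_exponent_lt one_lt_two h
      exact div_pos (by linarith) (by linarith [rpow_one (2 : ℝ)])
  have hs : 0 < s := div_pos hα₀ hc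
  have hv : (α - 1) * vFun α = (α - 1) * log r - α * log s := by
    rw [vFun, if_neg hα₁, ← hr_def, ← hs_def]
    field_simp [sub_ne_zero.2 hα₁]
  have hK (p : ℝ) :
      exp ((α - 1) * vFun α) * (s / r) ^ p = exp ((α - 1 - p) * log r + (p - α) * log s) := by
    rw [rpow_def_of_pos (div_pos hs hr), ← exp_add, log_div hs.ne' hr.ne', hv]
    ring_nf
  refine ⟨s / r, div_pos hs hr, fun σ => ?_⟩
  calc _ = exp ((α - 1) * vFun α) * (s / r) ^ α
        + α * (exp ((α - 1) * vFun α) * (s / r) ^ (α - 1)) * (σ - s / r) := by ring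
    _ = r⁻¹ + α * s⁻¹ * (σ - s / r) := by
      rw [hK, hK, ← exp_log (inv_pos.2 hr), ← exp_log (inv_pos.2 hs), log_inv, log_inv]
      ring_nf
    _ = _ := by
      rw [hr_def, hs_def]
      field_simp
      ring

lemma sub_le_exp_mul_vFun_mul_rpow {α σ : ℝ} (hα : 1 < α) (hσ : 0 ≤ σ) :
    (2 ^ α - 1) * σ - (2 ^ α - 2) ≤ exp ((α - 1) * vFun α) * σ ^ α := by
  obtain ⟨σ₀, hσ₀, htangent⟩ := exists_tangent_exp_mul_vFun (by linarith) hα.ne'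
  rw [← htangent σ]
  exact mul_le_mul_of_nonneg_left (rpow_tangent_le hα.le hσ₀ hσ) (exp_pos _).le

lemma exp_mul_vFun_mul_rpow_le_sub {α σ : ℝ} (hα₀ : 0 < α) (hα₁ : α < 1) (hσ : 0 ≤ σ) :
    exp ((α - 1) * vFun α) * σ ^ α ≤ (2 ^ α - 1) * σ - (2 ^ α - 2) := by
  obtain ⟨σ₀, hσ₀, htangent⟩ := exists_tangent_exp_mul_vFun hα₀ hα₁.ne
  rw [← htangent σ]
  exact mul_le_mul_of_nonneg_left (rpow_le_tangent hα₀.le hα₁.le hσ₀ hσ) (exp_pos _).le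

lemma vFun_one : vFun 1 = log 2 - 1 - log (log 2) := by
  rw [vFun, if_pos rfl, log_div two_ne_zero (mul_pos (exp_pos 1) (log_pos one_lt_two)).ne',
    log_mul (exp_pos 1).ne' (log_pos one_lt_two).ne', log_exp]
  ring

lemma two_mul_log_two_mul_one_sub_inv_le {σ : ℝ} (hσ : 0 < σ) :
    2 * log 2 * (1 - σ⁻¹) ≤ log σ + vFun 1 := by
  have hL := log_pos one_lt_two
  have := log_le_sub_one_of_pos (div_pos (mul_pos two_pos hL) hσ)
  rw [log_div (by positivity) hσ.ne', log_mul two_ne_zero hL.ne'] at this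
  rw [vFun_one, mul_one_sub, ← div_eq_mul_inv]
  linarith

lemma vFun_nonneg {α : ℝ} (hα : 0 < α) : 0 ≤ vFun α := by
  rcases lt_trichotomy α 1 with h | rfl | h
  · have hK : exp ((α - 1) * vFun α) ≤ 1 := by
      have := exp_mul_vFun_mul_rpow_le_sub hα h zero_le_one
      rw [one_rpow, mul_one, mul_one] at this
      linarith
    exact nonneg_of_mul_nonpos_right (exp_le_one_iff.1 hK) (by linarith)
  · rw [vFun_one]
    linarith [log_le_sub_one_of_pos (log_pos one_lt_two)]
  · have hK : 1 ≤ exp ((α - 1) * vFun α) := by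
      have := sub_le_exp_mul_vFun_mul_rpow h zero_le_one
      rw [one_rpow, mul_one, mul_one] at this
      linarith
    exact nonneg_of_mul_nonneg_right (one_le_exp_iff.1 hK) (by linarith)

section TwoBounded

variable {ι : Type*} {s : Finset ι} {q : ι → ℝ} {b : ℝ}

lemma div_mem_Icc_one_two (hb : 0 < b) (hq : ∀ j ∈ s, q j ∈ Set.Icc b (2 * b)) :
    ∀ j ∈ s, q j / b ∈ Set.Icc 1 2 := fun j hj =>
  ⟨(le_div_iff₀ hb).2 (by linarith [(hq j hj).1]), (div_le_iff₀ hb).2 (by linarith [(hq j hj).2])⟩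

lemma sum_rpow_le_of_one_lt {α : ℝ} (hα : 1 < α) (hb : 0 < b) (hs : s.Nonempty)
    (hq : ∀ j ∈ s, q j ∈ Set.Icc b (2 * b)) :
    ∑ j ∈ s, q j ^ α ≤ exp ((α - 1) * vFun α) * (#s * ((∑ j ∈ s, q j) / #s) ^ α) := by
  have hN : (0 : ℝ) < #s := by exact_mod_cast hs.card_pos
  have hS : 0 ≤ ∑ j ∈ s, q j := sum_nonneg fun j hj => hb.le.trans (hq j hj).1
  set σ := (∑ j ∈ s, q j) / #s / b with hσ
  calc ∑ j ∈ s, q j ^ α = ∑ j ∈ s, b ^ α * (q j / b) ^ α := sum_congr rfl fun j hj => by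
        rw [← mul_rpow hb.le (div_nonneg (hb.le.trans (hq j hj).1) hb.le), mul_div_cancel₀ _ hb.ne']
    _ ≤ ∑ j ∈ s, b ^ α * ((2 ^ α - 1) * (q j / b) - (2 ^ α - 2)) := by
        gcongr with j hj
        exact rpow_le_chord_one_two hα.le (div_mem_Icc_one_two hb hq j hj)
    _ = b ^ α * (#s * ((2 ^ α - 1) * σ - (2 ^ α - 2))) := by
        rw [← mul_sum, sum_sub_distrib, ← mul_sum, sum_const, nsmul_eq_mul, ← sum_div, hσ]
        field_simp
    _ ≤ b ^ α * (#s * (exp ((α - 1) * vFun α) * σ ^ α)) := by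
        gcongr
        exact sub_le_exp_mul_vFun_mul_rpow hα (by positivity)
    _ = _ := by
        rw [div_rpow (by positivity) hb.le]
        field_simp

lemma exp_mul_vFun_mul_le_sum_rpow {α : ℝ} (hα₀ : 0 < α) (hα₁ : α < 1) (hb : 0 < b)
    (hs : s.Nonempty) (hq : ∀ j ∈ s, q j ∈ Set.Icc b (2 * b)) :
    exp ((α - 1) * vFun α) * (#s * ((∑ j ∈ s, q j) / #s) ^ α) ≤ ∑ j ∈ s, q j ^ α := by
  have hN : (0 : ℝ) < #s := by exact_mod_cast hs.card_pos
  have hS : 0 ≤ ∑ j ∈ s, q j := sum_nonneg fun j hj => hb.le.trans (hq j hj).1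
  set σ := (∑ j ∈ s, q j) / #s / b with hσ
  calc _ = b ^ α * (#s * (exp ((α - 1) * vFun α) * σ ^ α)) := by
        rw [div_rpow (by positivity) hb.le]
        field_simp
    _ ≤ b ^ α * (#s * ((2 ^ α - 1) * σ - (2 ^ α - 2))) := by
        gcongr
        exact exp_mul_vFun_mul_rpow_le_sub hα₀ hα₁ (by positivity)
    _ = ∑ j ∈ s, b ^ α * ((2 ^ α - 1) * (q j / b) - (2 ^ α - 2)) := by
        rw [← mul_sum, sum_sub_distrib, ← mul_sum, sum_const, nsmul_eq_mul, ← sum_div, hσ]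
        field_simp
    _ ≤ ∑ j ∈ s, b ^ α * (q j / b) ^ α := by
        gcongr with j hj
        exact chord_one_two_le_rpow hα₀.le hα₁.le (div_mem_Icc_one_two hb hq j hj)
    _ = ∑ j ∈ s, q j ^ α := sum_congr rfl fun j hj => by
        rw [← mul_rpow hb.le (div_nonneg (hb.le.trans (hq j hj).1) hb.le), mul_div_cancel₀ _ hb.ne']

lemma sum_mul_log_le (hb : 0 < b) (hs : s.Nonempty) (hq : ∀ j ∈ s, q j ∈ Set.Icc b (2 * b)) :
    ∑ j ∈ s, q j * log (q j)
      ≤ (∑ j ∈ s, q j) * log ((∑ j ∈ s, q j) / #s) + (∑ j ∈ s, q j) * vFun 1 := by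
  have hN : (0 : ℝ) < #s := by exact_mod_cast hs.card_pos
  set S := ∑ j ∈ s, q j
  have hS : 0 < S := sum_pos (fun j hj => hb.trans_le (hq j hj).1) hs
  have hσ : 0 < S / #s / b := by positivity
  calc ∑ j ∈ s, q j * log (q j) = ∑ j ∈ s, (q j * log b + b * (q j / b * log (q j / b))) :=
        sum_congr rfl fun j hj => by
          rw [log_div (hb.trans_le (hq j hj).1).ne' hb.ne']
          field_simp
          ring
    _ ≤ ∑ j ∈ s, (q j * log b + b * (2 * log 2 * (q j / b - 1))) :=
        sum_le_sum fun j hj => add_le_add_right (mul_le_mul_of_nonneg_left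
          (mul_log_le_chord_one_two (div_mem_Icc_one_two hb hq j hj)) hb.le) _
    _ = S * log (S / #s) - S * log (S / #s / b) + S * (2 * log 2 * (1 - (S / #s / b)⁻¹)) := by
        rw [log_div (by positivity) hb.ne']
        simp only [sum_add_distrib, ← sum_mul, ← mul_sum, sum_sub_distrib, ← sum_div, sum_const,
          nsmul_eq_mul]
        field_simp
        ring
    _ ≤ S * log (S / #s) + S * vFun 1 := by
        have := mul_le_mul_of_nonneg_left (two_mul_log_two_mul_one_sub_inv_le hσ) hS.le
        linarith

end TwoBounded

lemma inv_one_sub_mul_log_sub_le_of_lt_one {α v A u T : ℝ} (hα : α < 1) (hv : 0 ≤ v)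
    (hA : 0 ≤ A) (hu : 0 < u) (h : exp ((α - 1) * v) * u ≤ T) :
    (1 - α)⁻¹ * log (A + u) - v ≤ (1 - α)⁻¹ * log (A + T) := by
  have hK : exp ((α - 1) * v) ≤ 1 :=
    exp_le_one_iff.2 (mul_nonpos_of_nonpos_of_nonneg (by linarith) hv)
  have hlog : (α - 1) * v + log (A + u) ≤ log (A + T) := by
    rw [← log_exp ((α - 1) * v), ← log_mul (exp_pos _).ne' (by positivity)]
    exact log_le_log (by positivity) (by nlinarith)
  calc (1 - α)⁻¹ * log (A + u) - v = (1 - α)⁻¹ * ((α - 1) * v + log (A + u)) := by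
        field_simp [sub_ne_zero.2 hα.ne']
        ring
    _ ≤ (1 - α)⁻¹ * log (A + T) := mul_le_mul_of_nonneg_left hlog (inv_nonneg.2 (by linarith))

lemma inv_one_sub_mul_log_sub_le_of_one_lt {α v A u T : ℝ} (hα : 1 < α) (hv : 0 ≤ v)
    (hA : 0 ≤ A) (hu : 0 < u) (hT : 0 < T) (h : T ≤ exp ((α - 1) * v) * u) :
    (1 - α)⁻¹ * log (A + u) - v ≤ (1 - α)⁻¹ * log (A + T) := by
  have hK : 1 ≤ exp ((α - 1) * v) := one_le_exp (mul_nonneg (by linarith) hv)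
  have hlog : log (A + T) ≤ (α - 1) * v + log (A + u) := by
    rw [← log_exp ((α - 1) * v), ← log_mul (exp_pos _).ne' (by positivity)]
    exact log_le_log (by positivity) (by nlinarith)
  calc (1 - α)⁻¹ * log (A + u) - v = (1 - α)⁻¹ * ((α - 1) * v + log (A + u)) := by
        field_simp [sub_ne_zero.2 hα.ne]
        ring
    _ ≤ (1 - α)⁻¹ * log (A + T) := mul_le_mul_of_nonpos_left hlog (inv_nonpos.2 (by linarith))

lemma sum_Icc_one_eq_add_sum_Icc {M : Type*} [AddCommMonoid M] (F : ℕ → M) {i m : ℕ}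
    (h : i ≤ m) : ∑ j ∈ Icc 1 m, F j = ∑ j ∈ Icc 1 i, F j + ∑ j ∈ Icc (i + 1) m, F j := by
  rw [show Icc 1 m = Ioc 0 m from Icc_add_one_left_eq_Ioc 0 m,
    show Icc 1 i = Ioc 0 i from Icc_add_one_left_eq_Ioc 0 i, Icc_add_one_left_eq_Ioc]
  exact (sum_Ioc_consecutive F i.zero_le h).symm

lemma sum_Icc_one_comp_eq_of_eq_ite {m i : ℕ} {Q Qstar : ℕ → ℝ} {S : ℝ} (him : i < m)
    (hQstar : ∀ j, Qstar j = if j ≤ i then Q j else S / ((m : ℝ) - i)) (F : ℝ → ℝ) :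
    ∑ j ∈ Icc 1 m, F (Qstar j)
      = ∑ j ∈ Icc 1 i, F (Q j) + #(Icc (i + 1) m) * F (S / #(Icc (i + 1) m)) := by
  have hcard : ((m : ℝ) - i) = #(Icc (i + 1) m) := by
    rw [Nat.card_Icc, Nat.add_sub_add_right, Nat.cast_sub him.le]
  rw [sum_Icc_one_eq_add_sum_Icc _ him.le, ← nsmul_eq_mul, ← sum_const]
  congr 1 <;> refine sum_congr rfl fun j hj => ?_ <;> rw [hQstar] <;> rw [mem_Icc] at hj
  · rw [if_pos hj.2]
  · rw [if_neg (by omega), hcard]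

lemma DecOn.mem_Icc_of_le_two_mul {m i : ℕ} {Q : ℕ → ℝ} (hdec : DecOn m Q)
    (hfac : Q (i + 1) ≤ 2 * Q m) : ∀ j ∈ Icc (i + 1) m, Q j ∈ Set.Icc (Q m) (2 * Q m) := by
  intro j hj
  rw [mem_Icc] at hj
  exact ⟨hdec j (by rw [mem_Icc]; omega) m (by rw [mem_Icc]; omega) hj.2,
    (hdec (i + 1) (by rw [mem_Icc]; omega) j (by rw [mem_Icc]; omega) hj.1).trans hfac⟩

theorem stmt16 (m : ℕ) (hm : 2 ≤ m)
    (Q : ℕ → ℝ) (hQ : IsPMF m Q) (hdec : DecOn m Q)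
    (i : ℕ) (hi : i ≤ m - 1) (hfac : Q (i + 1) ≤ 2 * Q m)
    (S : ℝ) (hS : S = ∑ j ∈ Finset.Icc (i + 1) m, Q j)
    (Qstar : ℕ → ℝ)
    (hQstar : ∀ j, Qstar j = if j ≤ i then Q j else S / ((m : ℝ) - (i : ℝ))) :
    ∀ α : ℝ, 0 < α → renyiH m α Qstar - vFun α ≤ renyiH m α Q := by
  intro α hα
  obtain ⟨hpos, hsum⟩ := hQ
  have him : i < m := by omega
  have hsplit (F : ℕ → ℝ) := sum_Icc_one_eq_add_sum_Icc F him.le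
  have hQstar_sum := sum_Icc_one_comp_eq_of_eq_ite him hQstar
  have hbound := hdec.mem_Icc_of_le_two_mul hfac
  set t := Icc (i + 1) m
  have htne : t.Nonempty := nonempty_Icc.2 him
  have hQm : 0 < Q m := hpos m (by rw [mem_Icc]; omega)
  have hhead : ∀ j ∈ Icc 1 i, 0 < Q j := fun j hj => hpos j (Icc_subset_Icc_right him.le hj)
  have hA : 0 ≤ ∑ j ∈ Icc 1 i, Q j ^ α := sum_nonneg fun j hj => rpow_nonneg (hhead j hj).le α
  have hSpos : 0 < S := hS ▸ sum_pos (fun j hj => hQm.trans_le (hbound j hj).1) htne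
  have hN : (0 : ℝ) < #t := by exact_mod_cast htne.card_pos
  have hu : 0 < #t * (S / #t) ^ α := by positivity
  rcases lt_trichotomy α 1 with hlt | rfl | hgt
  · rw [renyiH, renyiH, if_neg hlt.ne, if_neg hlt.ne, hQstar_sum (· ^ α), hsplit]
    exact inv_one_sub_mul_log_sub_le_of_lt_one hlt (vFun_nonneg hα) hA hu
      (hS ▸ exp_mul_vFun_mul_le_sum_rpow hα hlt hQm htne hbound)
  · have hS1 : S ≤ 1 := by
      linarith [hsplit Q, sum_nonneg fun j hj => (hhead j hj).le]
    have htail := hS ▸ sum_mul_log_le hQm htne hbound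
    have hv := mul_le_mul_of_nonneg_right hS1 (vFun_nonneg one_pos)
    rw [renyiH, renyiH, if_pos rfl, if_pos rfl, hQstar_sum (fun x => x * log x), hsplit,
      ← mul_assoc, mul_div_cancel₀ _ hN.ne']
    linarith
  · rw [renyiH, renyiH, if_neg hgt.ne', if_neg hgt.ne', hQstar_sum (· ^ α), hsplit]
    exact inv_one_sub_mul_log_sub_le_of_one_lt hgt (vFun_nonneg hα) hA hu
      (sum_pos (fun j hj => rpow_pos_of_pos (hQm.trans_le (hbound j hj).1) α) htne)
      (hS ▸ sum_rpow_le_of_one_lt hgt hQm htne hbound)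
end

section
/- Let n > m ≥ 2 and k ≥ 1 be integers, let X_1,…,X_k be i.i.d. random variables with X_1 ∼ P_X strictly positive on a set X with |X| = n and P_X(1) ≥ … ≥ P_X(n), let f ∈ F_{n,m} be an arbitrary deterministic function, and set Y_i = f(X_i) for all i. Let g_{X^k} and g_{Y^k} be ranking functions of X^k = (X_1,…,X_k) and Y^k = (Y_1,…,Y_k), respectively. Let X̃_m be as follows: if P_X(1) < 1/m, X̃_m is uniform on {1,…,m}; otherwise P_{X̃_m}(i) = P_X(i) for i ≤ n* and P_{X̃_m}(i) = (1/(m−n*))·Σ_{j=n*+1}^{n} P_X(j) for n* < i ≤ m, where n* is the maximal integer i ∈ {1,…,m−1} with P_X(i) ≥ (1/(m−i))·Σ_{j=i+1}^{n} P_X(j). Then for every ρ > 0: (1/k)·log( E[g_{X^k}(X^k)^ρ] / E[g_{Y^k}(Y^k)^ρ] ) ≥ ρ·[H_{1/(1+ρ)}(X) − H_{1/(1+ρ)}(X̃_m)] − (ρ/k)·log(1 + k·log n). -/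
open Finset

/-!
With `α = 1 / (1 + ρ)`, Arikan's bounds sandwich the `ρ`-th moment of a ranking function of an
i.i.d. block between `(∑ p ^ α) ^ (k (1 + ρ)) / (1 + k log n) ^ ρ` and `(∑ p ^ α) ^ (k (1 + ρ))`:
the lower bound is Hölder's inequality together with `∑ 1 / g ≤ 1 + k log n`, the upper one
follows from `g y · p(y) ^ α ≤ ∑ₓ p(x) ^ α`. The theorem therefore reduces to
`∑ P_{f(X)} ^ α ≤ ∑ P_{X̃_m} ^ α`. Sorted decreasingly, every partial sum of `P_{f(X)}` dominates
the corresponding partial sum of `P_{X̃_m}` (`f` maps the `t` most likely letters to at most `t`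
values, and beyond `n*` the profile of `X̃_m` is flat), and `q ↦ ∑ q ^ α` is Schur-concave:
sum the tangent lines of `t ↦ t ^ α` at the masses of `X̃_m` and apply Abel summation.
-/

open Real

section Ranking

variable {ι : Type*} {s : Finset ι}

theorem sum_inv_le_one_add_log {g : ι → ℕ} {N : ℕ} (hmaps : Set.MapsTo g s (Set.Icc 1 N))
    (hinj : Set.InjOn g s) : ∑ x ∈ s, ((g x : ℝ))⁻¹ ≤ 1 + log N := by
  have hharm : ∑ i ∈ Icc 1 N, ((i : ℝ))⁻¹ ≤ 1 + log N := by
    simpa [harmonic_eq_sum_Icc] using harmonic_le_one_add_log N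
  refine le_trans ?_ hharm
  rw [← sum_image (f := fun i : ℕ => ((i : ℝ))⁻¹) hinj]
  exact sum_le_sum_of_subset_of_nonneg
    (fun i hi => by obtain ⟨x, hx, rfl⟩ := mem_image.mp hi; simpa using hmaps hx)
    (fun i _ _ => by positivity)

theorem sum_rpow_one_div_one_add_rpow_le {p w : ι → ℝ} (hp : ∀ x ∈ s, 0 ≤ p x)
    (hw : ∀ x ∈ s, 0 < w x) {ρ : ℝ} (hρ : 0 < ρ) :
    (∑ x ∈ s, p x ^ (1 / (1 + ρ))) ^ (1 + ρ)
      ≤ (∑ x ∈ s, p x * w x ^ ρ) * (∑ x ∈ s, (w x)⁻¹) ^ ρ := by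
  have h1ρ : 0 < 1 + ρ := by linarith
  have hconj : HolderConjugate (1 + ρ) ((1 + ρ) / ρ) := by
    rw [holderConjugate_iff]; constructor
    · linarith
    · field_simp
  have hpw : ∀ x ∈ s, 0 ≤ p x * w x ^ ρ := fun x hx =>
    mul_nonneg (hp x hx) (rpow_nonneg (hw x hx).le _)
  have hold := inner_le_Lp_mul_Lq_of_nonneg s hconj
    (f := fun x => (p x * w x ^ ρ) ^ (1 / (1 + ρ))) (g := fun x => w x ^ (-(ρ / (1 + ρ))))
    (fun x hx => rpow_nonneg (hpw x hx) _) (fun x hx => rpow_nonneg (hw x hx).le _)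
  have hfg : ∀ x ∈ s, (p x * w x ^ ρ) ^ (1 / (1 + ρ)) * w x ^ (-(ρ / (1 + ρ)))
      = p x ^ (1 / (1 + ρ)) := fun x hx => by
    rw [mul_rpow (hp x hx) (rpow_nonneg (hw x hx).le _), ← rpow_mul (hw x hx).le, mul_assoc,
      ← rpow_add (hw x hx)]
    field_simp; simp
  have hf : ∀ x ∈ s, ((p x * w x ^ ρ) ^ (1 / (1 + ρ))) ^ (1 + ρ) = p x * w x ^ ρ :=
    fun x hx => by rw [← rpow_mul (hpw x hx)]; field_simp; simp
  have hg : ∀ x ∈ s, (w x ^ (-(ρ / (1 + ρ)))) ^ ((1 + ρ) / ρ) = (w x)⁻¹ :=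
    fun x hx => by rw [← rpow_mul (hw x hx).le]; field_simp; simp [rpow_neg_one]
  rw [sum_congr rfl hfg, sum_congr rfl hf, sum_congr rfl hg] at hold
  have hA : 0 ≤ ∑ x ∈ s, p x * w x ^ ρ := sum_nonneg hpw
  have hB : 0 ≤ ∑ x ∈ s, (w x)⁻¹ := sum_nonneg fun x hx => (inv_pos.2 (hw x hx)).le
  calc (∑ x ∈ s, p x ^ (1 / (1 + ρ))) ^ (1 + ρ)
      ≤ ((∑ x ∈ s, p x * w x ^ ρ) ^ (1 / (1 + ρ))
          * (∑ x ∈ s, (w x)⁻¹) ^ (1 / ((1 + ρ) / ρ))) ^ (1 + ρ) :=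
        rpow_le_rpow (sum_nonneg fun x hx => rpow_nonneg (hp x hx) _) hold h1ρ.le
    _ = (∑ x ∈ s, p x * w x ^ ρ) * (∑ x ∈ s, (w x)⁻¹) ^ ρ := by
        rw [mul_rpow (rpow_nonneg hA _) (rpow_nonneg hB _), ← rpow_mul hA, ← rpow_mul hB]
        field_simp; simp [mul_comm]

theorem card_filter_le_eq_of_bijOn {g : ι → ℕ} {N : ℕ} (hg : Set.BijOn g s (Set.Icc 1 N))
    {y : ι} (hy : y ∈ s) : #(s.filter fun x => g x ≤ g y) = g y := by
  have hN : g y ≤ N := (hg.mapsTo hy).2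
  have hcard := card_nbij (s := s.filter fun x => g x ≤ g y) (t := Icc 1 (g y)) g
    (fun x hx => mem_Icc.mpr ⟨(hg.mapsTo (mem_filter.mp hx).1).1, (mem_filter.mp hx).2⟩)
    (hg.injOn.mono fun x hx => (mem_filter.mp hx).1)
    (fun i hi => by
      obtain ⟨hi1, hi2⟩ := mem_Icc.mp hi
      obtain ⟨x, hx, rfl⟩ := hg.surjOn ⟨hi1, hi2.trans hN⟩
      exact ⟨x, mem_filter.mpr ⟨hx, hi2⟩, rfl⟩)
  rw [hcard, Nat.card_Icc, Nat.add_sub_cancel]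

theorem rank_mul_rpow_le_sum_rpow {p : ι → ℝ} {g : ι → ℕ} {N : ℕ}
    (hg : Set.BijOn g s (Set.Icc 1 N))
    (hrank : ∀ x ∈ s, ∀ y ∈ s, p y < p x → g x < g y) {α : ℝ} (hα : 0 ≤ α)
    (hp : ∀ x ∈ s, 0 ≤ p x) {y : ι} (hy : y ∈ s) :
    (g y : ℝ) * p y ^ α ≤ ∑ x ∈ s, p x ^ α := by
  calc (g y : ℝ) * p y ^ α = ∑ x ∈ s.filter (fun x => g x ≤ g y), p y ^ α := by
        rw [sum_const, card_filter_le_eq_of_bijOn hg hy, nsmul_eq_mul]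
    _ ≤ ∑ x ∈ s.filter (fun x => g x ≤ g y), p x ^ α := by
        refine sum_le_sum fun x hx => ?_
        obtain ⟨hxs, hxy⟩ := mem_filter.mp hx
        exact rpow_le_rpow (hp y hy) (not_lt.mp fun h => (hrank y hy x hxs h).not_ge hxy) hα
    _ ≤ ∑ x ∈ s, p x ^ α :=
        sum_le_sum_of_subset_of_nonneg (filter_subset _ _) fun x hx _ => rpow_nonneg (hp x hx) _

theorem sum_mul_rank_rpow_le {p : ι → ℝ} {g : ι → ℕ} {N : ℕ}
    (hg : Set.BijOn g s (Set.Icc 1 N))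
    (hrank : ∀ x ∈ s, ∀ y ∈ s, p y < p x → g x < g y)
    (hp : ∀ x ∈ s, 0 ≤ p x) {ρ : ℝ} (hρ : 0 < ρ) :
    ∑ x ∈ s, p x * (g x : ℝ) ^ ρ ≤ (∑ x ∈ s, p x ^ (1 / (1 + ρ))) ^ (1 + ρ) := by
  set α := 1 / (1 + ρ)
  have hα : 0 < α := by positivity
  set S := ∑ x ∈ s, p x ^ α
  have hS : 0 ≤ S := sum_nonneg fun x hx => rpow_nonneg (hp x hx) _
  have key : ∀ y ∈ s, p y * (g y : ℝ) ^ ρ ≤ p y ^ α * S ^ ρ := fun y hy => by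
    have hpy := hp y hy
    have hsplit : p y = p y ^ α * (p y ^ α) ^ ρ := by
      have hα1 : α + α * ρ = 1 := by simp only [α]; field_simp
      rw [← rpow_mul hpy, ← rpow_add' hpy (by positivity), hα1, rpow_one]
    calc p y * (g y : ℝ) ^ ρ = p y ^ α * ((g y : ℝ) * p y ^ α) ^ ρ := by
          rw [mul_rpow (Nat.cast_nonneg _) (rpow_nonneg hpy _)]
          nth_rewrite 1 [hsplit]; ring
      _ ≤ p y ^ α * S ^ ρ := by
          gcongr
          exact rank_mul_rpow_le_sum_rpow hg hrank hα.le hp hy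
  calc ∑ x ∈ s, p x * (g x : ℝ) ^ ρ ≤ ∑ x ∈ s, p x ^ α * S ^ ρ := sum_le_sum key
    _ = S ^ (1 + ρ) := by rw [← sum_mul, rpow_add' hS (by positivity), rpow_one]

end Ranking

theorem sum_Icc_one_eq_sum_range (g : ℕ → ℝ) (t : ℕ) :
    ∑ j ∈ Icc 1 t, g j = ∑ i ∈ range t, g (i + 1) := by
  induction t with
  | zero => simp
  | succ t ih => rw [sum_Icc_succ_top (by omega), ih, sum_range_succ]

theorem sum_Icc_one_add_sum_Icc (g : ℕ → ℝ) {a b : ℕ} (h : a ≤ b) :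
    ∑ j ∈ Icc 1 a, g j + ∑ j ∈ Icc (a + 1) b, g j = ∑ j ∈ Icc 1 b, g j := by
  simp only [Icc_add_one_left_eq_Ioc]
  rw [show Icc 1 a = Ioc 0 a from Icc_add_one_left_eq_Ioc 0 a,
    show Icc 1 b = Ioc 0 b from Icc_add_one_left_eq_Ioc 0 b]
  exact sum_Ioc_consecutive g (Nat.zero_le a) h

theorem sum_range_ite_of_le (P : ℕ → ℝ) (c : ℝ) {s t : ℕ} (hst : s ≤ t) :
    ∑ i ∈ range t, (if i + 1 ≤ s then P (i + 1) else c)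
      = ∑ i ∈ Icc 1 s, P i + ((t : ℝ) - s) * c := by
  have hhead : ∀ i ∈ range s, (if i + 1 ≤ s then P (i + 1) else c) = P (i + 1) :=
    fun i hi => if_pos (mem_range.mp hi)
  have htail : ∀ i ∈ Ico s t, (if i + 1 ≤ s then P (i + 1) else c) = c :=
    fun i hi => if_neg (by have := (mem_Ico.mp hi).1; omega)
  rw [← sum_range_add_sum_Ico _ hst, sum_Icc_one_eq_sum_range, sum_congr rfl hhead,
    sum_congr rfl htail, sum_const, Nat.card_Ico, nsmul_eq_mul, Nat.cast_sub hst]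

theorem sum_le_sum_range_of_card_le {v : ℕ → ℝ} (hv : Antitone v) (hv0 : ∀ i, 0 ≤ v i)
    {S : Finset ℕ} {t : ℕ} (hS : #S ≤ t) : ∑ i ∈ S, v i ≤ ∑ i ∈ range t, v i := by
  have hcard : #(S \ range t) ≤ #(range t \ S) :=
    card_sdiff_le_card_sdiff_iff.mpr (by rwa [card_range])
  have hout : ∑ i ∈ S \ range t, v i ≤ ∑ i ∈ range t \ S, v i :=
    calc ∑ i ∈ S \ range t, v i ≤ #(S \ range t) • v t :=
          sum_le_card_nsmul _ _ _ fun i hi => hv (by simpa using (mem_sdiff.mp hi).2)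
      _ ≤ #(range t \ S) • v t := nsmul_le_nsmul_left (hv0 t) hcard
      _ ≤ ∑ i ∈ range t \ S, v i :=
          card_nsmul_le_sum _ _ _ fun i hi => hv (mem_range.mp (mem_sdiff.mp hi).1).le
  rw [← sum_inter_add_sum_sdiff S (range t), ← sum_inter_add_sum_sdiff (range t) S, inter_comm]
  linarith

theorem mul_sum_Ico_le_mul_sum_Ico {v : ℕ → ℝ} (hv : Antitone v) {s t m : ℕ} (hst : s ≤ t)
    (htm : t ≤ m) :
    ((t : ℝ) - s) * ∑ i ∈ Ico s m, v i ≤ ((m : ℝ) - s) * ∑ i ∈ Ico s t, v i := by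
  have hhead : ((t : ℝ) - s) * v t ≤ ∑ i ∈ Ico s t, v i := by
    simpa [Nat.cast_sub hst] using
      card_nsmul_le_sum (Ico s t) v (v t) fun i hi => hv (mem_Ico.mp hi).2.le
  have htail : ∑ i ∈ Ico t m, v i ≤ ((m : ℝ) - t) * v t := by
    simpa [Nat.cast_sub htm] using
      sum_le_card_nsmul (Ico t m) v (v t) fun i hi => hv (mem_Ico.mp hi).1
  have hts : (0 : ℝ) ≤ (t : ℝ) - s := sub_nonneg.mpr (by exact_mod_cast hst)
  have hmt : (0 : ℝ) ≤ (m : ℝ) - t := sub_nonneg.mpr (by exact_mod_cast htm)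
  rw [← sum_Ico_consecutive v hst htm]
  nlinarith [mul_le_mul_of_nonneg_left htail hts, mul_le_mul_of_nonneg_left hhead hmt]

theorem add_mul_le_sum_range {v : ℕ → ℝ} (hv : Antitone v) {s t m : ℕ} (hst : s ≤ t)
    (htm : t ≤ m) {a c : ℝ} (ha : a ≤ ∑ i ∈ range s, v i)
    (htot : a + ((m : ℝ) - s) * c = ∑ i ∈ range m, v i) :
    a + ((t : ℝ) - s) * c ≤ ∑ i ∈ range t, v i := by
  rcases hst.eq_or_lt with rfl | hst'
  · simpa using ha
  have hms : (0 : ℝ) < (m : ℝ) - s := sub_pos.mpr (by exact_mod_cast hst'.trans_le htm)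
  have hmt : (0 : ℝ) ≤ (m : ℝ) - t := sub_nonneg.mpr (by exact_mod_cast htm)
  have havg := mul_sum_Ico_le_mul_sum_Ico hv hst htm
  rw [← sum_range_add_sum_Ico v (hst.trans htm)] at htot
  rw [← sum_range_add_sum_Ico v hst]
  refine le_of_mul_le_mul_left ?_ hms
  nlinarith [mul_le_mul_of_nonneg_left ha hmt]

theorem rpow_le_rpow_add_mul_sub {α x v : ℝ} (hα0 : 0 ≤ α) (hα1 : α ≤ 1) (hx : 0 < x)
    (hv : 0 ≤ v) : v ^ α ≤ x ^ α + α * x ^ (α - 1) * (v - x) := by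
  have hs : -1 ≤ (v - x) / x := by rw [le_div_iff₀ hx]; linarith
  calc v ^ α = x ^ α * (1 + (v - x) / x) ^ α := by
        rw [← mul_rpow hx.le (by linarith)]; congr 1; field_simp; ring
    _ ≤ x ^ α * (1 + α * ((v - x) / x)) := by
        gcongr; exact rpow_one_add_le_one_add_mul_self hs hα0 hα1
    _ = x ^ α + α * x ^ (α - 1) * (v - x) := by
        rw [rpow_sub_one hx.ne']; field_simp

theorem sum_range_mul_nonpos_of_monotone {a d : ℕ → ℝ} {m : ℕ} (ha : Monotone a)
    (hd : ∀ t ≤ m, 0 ≤ ∑ i ∈ range t, d i) (hdm : ∑ i ∈ range m, d i = 0) :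
    ∑ i ∈ range m, a i * d i ≤ 0 := by
  have := sum_range_by_parts a d m
  simp only [smul_eq_mul, hdm, mul_zero, zero_sub] at this
  rw [this, neg_nonpos]
  exact sum_nonneg fun i hi =>
    mul_nonneg (sub_nonneg.mpr (ha i.le_succ)) (hd _ (by have := mem_range.mp hi; omega))

theorem sum_range_rpow_le_of_prefix_le {x v : ℕ → ℝ} {m : ℕ} (hx : Antitone x)
    (hx0 : ∀ i, 0 < x i) (hv0 : ∀ i, 0 ≤ v i)
    (hpre : ∀ t ≤ m, ∑ i ∈ range t, x i ≤ ∑ i ∈ range t, v i)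
    (htot : ∑ i ∈ range m, v i = ∑ i ∈ range m, x i) {α : ℝ} (hα0 : 0 ≤ α) (hα1 : α ≤ 1) :
    ∑ i ∈ range m, v i ^ α ≤ ∑ i ∈ range m, x i ^ α := by
  -- tangent lines of the concave `t ↦ t ^ α` at the `x i`; their slopes increase with `i`
  have hslope : Monotone fun i => α * x i ^ (α - 1) := fun i j hij =>
    mul_le_mul_of_nonneg_left (rpow_le_rpow_of_nonpos (hx0 j) (hx hij) (by linarith)) hα0
  have hcross := sum_range_mul_nonpos_of_monotone (d := fun i => v i - x i) hslope
    (fun t ht => by simpa [sum_sub_distrib] using hpre t ht) (by simp [sum_sub_distrib, htot])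
  calc ∑ i ∈ range m, v i ^ α
      ≤ ∑ i ∈ range m, (x i ^ α + α * x i ^ (α - 1) * (v i - x i)) :=
        sum_le_sum fun i _ => rpow_le_rpow_add_mul_sub hα0 hα1 (hx0 i) (hv0 i)
    _ ≤ ∑ i ∈ range m, x i ^ α := by rw [sum_add_distrib]; linarith

theorem exists_antitone_rearrangement (m : ℕ) {Q : ℕ → ℝ} (hQ : ∀ j ∈ Icc 1 m, 0 ≤ Q j) :
    ∃ (v : ℕ → ℝ) (e : ℕ → ℕ), Antitone v ∧ (∀ i, 0 ≤ v i) ∧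
      Set.BijOn e (Icc 1 m) (range m) ∧ ∀ j ∈ Icc 1 m, v (e j) = Q j := by
  set u : Fin m → ℝ := fun i => Q (i + 1)
  set σ := Tuple.sort fun i => -u i
  have hσ : Antitone (u ∘ σ) := fun i j hij =>
    neg_le_neg_iff.mp (show -u (σ i) ≤ -u (σ j) from Tuple.monotone_sort (fun i => -u i) hij)
  have hu0 : ∀ i, 0 ≤ u i := fun i => hQ _ (mem_Icc.mpr ⟨by omega, by omega⟩)
  set v : ℕ → ℝ := fun i => if h : i < m then u (σ ⟨i, h⟩) else 0
  set e : ℕ → ℕ := fun j => if h : j - 1 < m then (σ.symm ⟨j - 1, h⟩ : ℕ) else 0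
  have hv0 : ∀ i, 0 ≤ v i := fun i => by
    simp only [v]; split
    · exact hu0 _
    · exact le_rfl
  refine ⟨v, e, fun i j hij => ?_, hv0, ⟨fun j hj => ?_, fun j₁ hj₁ j₂ hj₂ h => ?_, ?_⟩,
    fun j hj => ?_⟩
  · by_cases hj : j < m
    · simp only [v, dif_pos hj, dif_pos (hij.trans_lt hj)]
      exact hσ (Fin.mk_le_mk.mpr hij)
    · simp only [v, dif_neg hj]; exact hv0 i
  · obtain ⟨hj1, hjm⟩ := mem_Icc.mp hj
    simp only [e, dif_pos (by omega : j - 1 < m)]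
    exact mem_coe.mpr (mem_range.mpr (Fin.is_lt _))
  · obtain ⟨h1, h1m⟩ := mem_Icc.mp hj₁
    obtain ⟨h2, h2m⟩ := mem_Icc.mp hj₂
    simp only [e, dif_pos (by omega : j₁ - 1 < m), dif_pos (by omega : j₂ - 1 < m)] at h
    have := congrArg Fin.val (σ.symm.injective (Fin.ext h))
    simp only at this
    omega
  · intro i hi
    have him := mem_range.mp hi
    refine ⟨σ ⟨i, him⟩ + 1, mem_Icc.mpr ⟨by omega, by omega⟩, ?_⟩
    simp [e]
  · obtain ⟨hj1, hjm⟩ := mem_Icc.mp hj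
    simp only [e, dif_pos (by omega : j - 1 < m), v, dif_pos (Fin.is_lt _), Fin.eta,
      Equiv.apply_symm_apply, u]
    congr 1
    omega

theorem mem_seqSet {n k : ℕ} {x : Fin k → ℕ} : x ∈ seqSet n k ↔ ∀ i, x i ∈ Icc 1 n :=
  Fintype.mem_piFinset

theorem prodP_nonneg {n k : ℕ} {P : ℕ → ℝ} (hP : ∀ i ∈ Icc 1 n, 0 ≤ P i) {x : Fin k → ℕ}
    (hx : x ∈ seqSet n k) : 0 ≤ prodP k P x :=
  prod_nonneg fun i _ => hP _ (mem_seqSet.mp hx i)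

theorem sum_prodP_rpow {n k : ℕ} {P : ℕ → ℝ} (hP : ∀ i ∈ Icc 1 n, 0 ≤ P i) (α : ℝ) :
    ∑ x ∈ seqSet n k, prodP k P x ^ α = (∑ i ∈ Icc 1 n, P i ^ α) ^ k := by
  calc ∑ x ∈ seqSet n k, prodP k P x ^ α = ∑ x ∈ seqSet n k, ∏ i, P (x i) ^ α :=
        sum_congr rfl fun x hx =>
          (finsetProd_rpow _ _ (fun i _ => hP _ (mem_seqSet.mp hx i)) α).symm
    _ = (∑ i ∈ Icc 1 n, P i ^ α) ^ k := by
        rw [seqSet, ← prod_univ_sum (fun _ => Icc 1 n) (fun _ i => P i ^ α), prod_const,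
          card_univ, Fintype.card_fin]

theorem one_le_gmoment {n k : ℕ} {P : ℕ → ℝ} (hP : ∀ i ∈ Icc 1 n, 0 ≤ P i)
    (hsum : ∑ i ∈ Icc 1 n, P i = 1) {g : (Fin k → ℕ) → ℕ}
    (hg : ∀ x ∈ seqSet n k, 1 ≤ g x) {ρ : ℝ} (hρ : 0 ≤ ρ) :
    1 ≤ gmoment n k P g ρ := by
  have htotal : ∑ x ∈ seqSet n k, prodP k P x = 1 := by
    simpa [hsum] using sum_prodP_rpow (k := k) hP 1
  rw [← htotal]
  refine sum_le_sum fun x hx => le_mul_of_one_le_right (prodP_nonneg hP hx) ?_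
  exact one_le_rpow (by exact_mod_cast hg x hx) hρ

theorem rpow_sum_rpow_le_gmoment_mul {n k : ℕ} {P : ℕ → ℝ} (hP : ∀ i ∈ Icc 1 n, 0 ≤ P i)
    {g : (Fin k → ℕ) → ℕ} (hg : Set.BijOn g (seqSet n k) (Set.Icc 1 (n ^ k))) {ρ : ℝ}
    (hρ : 0 < ρ) :
    ((∑ i ∈ Icc 1 n, P i ^ (1 / (1 + ρ))) ^ k) ^ (1 + ρ)
      ≤ gmoment n k P g ρ * (1 + k * log n) ^ ρ := by
  have hg1 : ∀ x ∈ seqSet n k, (0 : ℝ) < g x := fun x hx => by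
    exact_mod_cast (hg.mapsTo hx).1
  have hinv := sum_inv_le_one_add_log hg.mapsTo hg.injOn
  rw [Nat.cast_pow, log_pow] at hinv
  rw [← sum_prodP_rpow hP]
  refine (sum_rpow_one_div_one_add_rpow_le (fun x hx => prodP_nonneg hP hx) hg1 hρ).trans ?_
  have hinv0 : 0 ≤ ∑ x ∈ seqSet n k, ((g x : ℝ))⁻¹ :=
    sum_nonneg fun x hx => (inv_pos.2 (hg1 x hx)).le
  exact mul_le_mul_of_nonneg_left (rpow_le_rpow hinv0 hinv hρ.le)
    (sum_nonneg fun x hx => mul_nonneg (prodP_nonneg hP hx) (by positivity))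

theorem gmoment_le_rpow_sum_rpow {n k : ℕ} {P : ℕ → ℝ} (hP : ∀ i ∈ Icc 1 n, 0 ≤ P i)
    {g : (Fin k → ℕ) → ℕ} (hg : IsRanking n k P g) {ρ : ℝ} (hρ : 0 < ρ) :
    gmoment n k P g ρ ≤ ((∑ i ∈ Icc 1 n, P i ^ (1 / (1 + ρ))) ^ k) ^ (1 + ρ) := by
  rw [← sum_prodP_rpow hP]
  exact sum_mul_rank_rpow_le hg.1 hg.2 (fun x hx => prodP_nonneg hP hx) hρ

theorem renyiH_one_div_one_add (n : ℕ) (P : ℕ → ℝ) {ρ : ℝ} (hρ : 0 < ρ) :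
    renyiH n (1 / (1 + ρ)) P = (1 + ρ) / ρ * log (∑ i ∈ Icc 1 n, P i ^ (1 / (1 + ρ))) := by
  have hne : 1 / (1 + ρ) ≠ 1 := by
    rw [Ne, div_eq_one_iff_eq (by linarith)]; linarith
  have h1ρ : 1 + ρ ≠ 0 := by linarith
  rw [renyiH, if_neg hne, show 1 - 1 / (1 + ρ) = ρ / (1 + ρ) by field_simp; ring, inv_div]

theorem one_le_sum_rpow {n : ℕ} {P : ℕ → ℝ} (hP : ∀ i ∈ Icc 1 n, 0 ≤ P i)
    (hsum : ∑ i ∈ Icc 1 n, P i = 1) {α : ℝ} (hα : α ≤ 1) : 1 ≤ ∑ i ∈ Icc 1 n, P i ^ α :=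
  hsum ▸ sum_le_sum fun i hi =>
    self_le_rpow_of_le_one (hP i hi) (hsum ▸ single_le_sum hP hi) hα

theorem le_log_gmoment {n k : ℕ} {P : ℕ → ℝ} (hP : ∀ i ∈ Icc 1 n, 0 ≤ P i)
    (hsum : ∑ i ∈ Icc 1 n, P i = 1) {g : (Fin k → ℕ) → ℕ}
    (hg : Set.BijOn g (seqSet n k) (Set.Icc 1 (n ^ k))) {ρ : ℝ} (hρ : 0 < ρ) :
    k * (1 + ρ) * log (∑ i ∈ Icc 1 n, P i ^ (1 / (1 + ρ))) - ρ * log (1 + k * log n)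
      ≤ log (gmoment n k P g ρ) := by
  have hS := one_le_sum_rpow hP hsum (div_le_one_of_le₀ (by linarith) (by linarith) :
    1 / (1 + ρ) ≤ 1)
  have hE := one_le_gmoment hP hsum (fun x hx => (hg.mapsTo hx).1) hρ.le
  have hL : 0 < 1 + k * log n := by
    have : 0 ≤ log n := log_natCast_nonneg n
    positivity
  have h := log_le_log (by positivity) (rpow_sum_rpow_le_gmoment_mul hP hg hρ)
  rw [log_mul (by positivity) (by positivity), log_rpow (by positivity), log_rpow hL,
    log_pow] at h
  linarith

theorem log_gmoment_le {n k : ℕ} {P : ℕ → ℝ} (hP : ∀ i ∈ Icc 1 n, 0 ≤ P i)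
    (hsum : ∑ i ∈ Icc 1 n, P i = 1) {g : (Fin k → ℕ) → ℕ} (hg : IsRanking n k P g) {ρ : ℝ}
    (hρ : 0 < ρ) :
    log (gmoment n k P g ρ) ≤ k * (1 + ρ) * log (∑ i ∈ Icc 1 n, P i ^ (1 / (1 + ρ))) := by
  have hS := one_le_sum_rpow hP hsum (div_le_one_of_le₀ (by linarith) (by linarith) :
    1 / (1 + ρ) ≤ 1)
  have hE := one_le_gmoment hP hsum (fun x hx => (hg.1.mapsTo hx).1) hρ.le
  have h := log_le_log (by positivity) (gmoment_le_rpow_sum_rpow hP hg hρ)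
  rw [log_rpow (by positivity), log_pow] at h
  linarith

theorem push_nonneg {n : ℕ} {P : ℕ → ℝ} (hP : ∀ i ∈ Icc 1 n, 0 ≤ P i) (f : ℕ → ℕ) (j : ℕ) :
    0 ≤ push n f P j :=
  sum_nonneg fun i hi => hP i (mem_filter.mp hi).1

theorem sum_push {n m : ℕ} (P : ℕ → ℝ) {f : ℕ → ℕ} (hf : ∀ i ∈ Icc 1 n, f i ∈ Icc 1 m) :
    ∑ j ∈ Icc 1 m, push n f P j = ∑ i ∈ Icc 1 n, P i :=
  sum_fiberwise_of_maps_to hf P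

theorem sum_Icc_le_sum_image_push {n : ℕ} {P : ℕ → ℝ} (hP : ∀ i ∈ Icc 1 n, 0 ≤ P i)
    (f : ℕ → ℕ) {t : ℕ} (ht : t ≤ n) :
    ∑ i ∈ Icc 1 t, P i ≤ ∑ j ∈ (Icc 1 t).image f, push n f P j := by
  rw [← sum_fiberwise_of_maps_to (g := f) (fun i hi => mem_image_of_mem f hi) P]
  refine sum_le_sum fun j _ => sum_le_sum_of_subset_of_nonneg
    (filter_subset_filter _ (Icc_subset_Icc_right ht)) fun i hi _ => hP i (mem_filter.mp hi).1

theorem sum_Icc_le_sum_range_of_rearrangement {n m : ℕ} {P : ℕ → ℝ}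
    (hP : ∀ i ∈ Icc 1 n, 0 ≤ P i) {f : ℕ → ℕ} (hf : ∀ i ∈ Icc 1 n, f i ∈ Icc 1 m)
    {v : ℕ → ℝ} {e : ℕ → ℕ} (hv : Antitone v) (hv0 : ∀ i, 0 ≤ v i)
    (he : Set.InjOn e (Icc 1 m)) (hve : ∀ j ∈ Icc 1 m, v (e j) = push n f P j) {t : ℕ}
    (ht : t ≤ n) : ∑ i ∈ Icc 1 t, P i ≤ ∑ i ∈ range t, v i := by
  set S := (Icc 1 t).image f
  have hSm : S ⊆ Icc 1 m := fun j hj => by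
    obtain ⟨i, hi, rfl⟩ := mem_image.mp hj
    exact hf i (Icc_subset_Icc_right ht hi)
  have hinj : Set.InjOn e S := he.mono fun j hj => hSm hj
  calc ∑ i ∈ Icc 1 t, P i ≤ ∑ j ∈ S, push n f P j := sum_Icc_le_sum_image_push hP f ht
    _ = ∑ i ∈ S.image e, v i := by
        rw [sum_image hinj]; exact (sum_congr rfl fun j hj => hve j (hSm hj)).symm
    _ ≤ ∑ i ∈ range t, v i := by
        refine sum_le_sum_range_of_card_le hv hv0 ((card_image_le).trans ?_)
        simpa using card_image_le (s := Icc 1 t) (f := f)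

-- The uniform case is the step profile with `s = 0` and `c = 1 / m`; otherwise `s = n*`.
theorem tildeX_eq_step {n m : ℕ} (hm : 2 ≤ m) (hmn : m ≤ n) {P : ℕ → ℝ} (hP : IsPMF n P)
    (hdec : DecOn n P) :
    ∃ (s : ℕ) (c : ℝ), s < m ∧ 0 < c ∧ (∀ j ∈ Icc 1 s, c ≤ P j) ∧
      ∑ i ∈ Icc 1 s, P i + ((m : ℝ) - s) * c = 1 ∧
      ∀ j, 1 ≤ j → tildeX n m P j = if j ≤ s then P j else c := by
  have hm0 : (0 : ℝ) < m := by positivity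
  by_cases hunif : P 1 < 1 / (m : ℝ)
  · refine ⟨0, 1 / m, by omega, by positivity, by simp, by field_simp; simp, fun j hj => ?_⟩
    rw [tildeX, if_pos hunif, if_neg (by omega)]
  set K := {i : ℕ | 1 ≤ i ∧ i ≤ m - 1 ∧
    ((m : ℝ) - (i : ℝ))⁻¹ * ∑ j ∈ Icc (i + 1) n, P j ≤ P i}
  have h1K : 1 ∈ K := by
    refine ⟨le_rfl, by omega, ?_⟩
    have hsplit := sum_Icc_one_add_sum_Icc P (by omega : 1 ≤ n)
    rw [Icc_self, sum_singleton, hP.2] at hsplit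
    have hP1 : 1 ≤ m * P 1 := by rw [not_lt, div_le_iff₀ hm0] at hunif; linarith
    have hm1 : (0 : ℝ) < m - 1 := by
      have : (2 : ℝ) ≤ m := by exact_mod_cast hm
      linarith
    rw [Nat.cast_one, inv_mul_le_iff₀ hm1]
    nlinarith
  obtain ⟨hs1, hsm1, hsc⟩ : nStar n m P ∈ K := Nat.sSup_mem ⟨1, h1K⟩ ⟨m - 1, fun i hi => hi.2.1⟩
  set s := nStar n m P
  have hsm : s < m := by omega
  have hms : (0 : ℝ) < m - s := sub_pos.mpr (by exact_mod_cast hsm)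
  refine ⟨s, ((m : ℝ) - s)⁻¹ * ∑ j ∈ Icc (s + 1) n, P j, hsm, ?_, fun j hj => ?_, ?_,
    fun j hj => ?_⟩
  · refine mul_pos (inv_pos.mpr hms) (sum_pos (fun i hi => hP.1 i ?_) ⟨s + 1, ?_⟩)
    · obtain ⟨hi1, hin⟩ := mem_Icc.mp hi
      exact mem_Icc.mpr ⟨by omega, hin⟩
    · exact mem_Icc.mpr ⟨le_rfl, by omega⟩
  · obtain ⟨hj1, hjs⟩ := mem_Icc.mp hj
    exact hsc.trans (hdec j (mem_Icc.mpr ⟨hj1, by omega⟩) s (mem_Icc.mpr ⟨hs1, by omega⟩) hjs)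
  · rw [← mul_assoc, mul_inv_cancel₀ hms.ne', one_mul, sum_Icc_one_add_sum_Icc P (by omega), hP.2]
  · rw [tildeX, if_neg hunif]

theorem tildeX_pos {n m : ℕ} (hm : 2 ≤ m) (hmn : m ≤ n) {P : ℕ → ℝ} (hP : IsPMF n P)
    (hdec : DecOn n P) {j : ℕ} (hj : 1 ≤ j) : 0 < tildeX n m P j := by
  obtain ⟨s, c, hsm, hc, -, -, htX⟩ := tildeX_eq_step hm hmn hP hdec
  rw [htX j hj]
  split_ifs with hjs
  · exact hP.1 j (mem_Icc.mpr ⟨hj, by omega⟩)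
  · exact hc

theorem tildeX_le_tildeX_of_le {n m : ℕ} (hm : 2 ≤ m) (hmn : m ≤ n) {P : ℕ → ℝ} (hP : IsPMF n P)
    (hdec : DecOn n P) {i j : ℕ} (hi : 1 ≤ i) (hij : i ≤ j) :
    tildeX n m P j ≤ tildeX n m P i := by
  obtain ⟨s, c, hsm, -, hcP, -, htX⟩ := tildeX_eq_step hm hmn hP hdec
  rw [htX i hi, htX j (hi.trans hij)]
  split_ifs with hjs his his
  · exact hdec i (mem_Icc.mpr ⟨hi, by omega⟩) j (mem_Icc.mpr ⟨by omega, by omega⟩) hij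
  · omega
  · exact hcP i (mem_Icc.mpr ⟨hi, his⟩)
  · exact le_rfl

theorem sum_range_tildeX_succ_le {n m : ℕ} (hm : 2 ≤ m) (hmn : m ≤ n) {P : ℕ → ℝ}
    (hP : IsPMF n P) (hdec : DecOn n P) {v : ℕ → ℝ} (hv : Antitone v)
    (hv1 : ∑ i ∈ range m, v i = 1)
    (hPv : ∀ t ≤ m, ∑ i ∈ Icc 1 t, P i ≤ ∑ i ∈ range t, v i) {t : ℕ} (ht : t ≤ m) :
    ∑ i ∈ range t, tildeX n m P (i + 1) ≤ ∑ i ∈ range t, v i := by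
  obtain ⟨s, c, hsm, -, -, hmass, htX⟩ := tildeX_eq_step hm hmn hP hdec
  rw [sum_congr rfl fun i _ => htX (i + 1) (by omega)]
  rcases le_total t s with hts | hst
  · have hhead : ∀ i ∈ range t, (if i + 1 ≤ s then P (i + 1) else c) = P (i + 1) :=
      fun i hi => if_pos (by have := mem_range.mp hi; omega)
    rw [sum_congr rfl hhead, ← sum_Icc_one_eq_sum_range]
    exact hPv t ht
  · rw [sum_range_ite_of_le P c hst]
    exact add_mul_le_sum_range hv hst ht (hPv s hsm.le) (hmass.trans hv1.symm)

theorem sum_range_tildeX_succ {n m : ℕ} (hm : 2 ≤ m) (hmn : m ≤ n) {P : ℕ → ℝ}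
    (hP : IsPMF n P) (hdec : DecOn n P) : ∑ i ∈ range m, tildeX n m P (i + 1) = 1 := by
  obtain ⟨s, c, hsm, -, -, hmass, htX⟩ := tildeX_eq_step hm hmn hP hdec
  rw [sum_congr rfl fun i _ => htX (i + 1) (by omega), sum_range_ite_of_le P c hsm.le, hmass]

theorem sum_push_rpow_le_sum_tildeX_rpow {n m : ℕ} (hm : 2 ≤ m) (hmn : m ≤ n) {P : ℕ → ℝ}
    (hP : IsPMF n P) (hdec : DecOn n P) {f : ℕ → ℕ} (hf : ∀ i ∈ Icc 1 n, f i ∈ Icc 1 m)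
    {α : ℝ} (hα0 : 0 ≤ α) (hα1 : α ≤ 1) :
    ∑ j ∈ Icc 1 m, push n f P j ^ α ≤ ∑ j ∈ Icc 1 m, tildeX n m P j ^ α := by
  have hP0 : ∀ i ∈ Icc 1 n, 0 ≤ P i := fun i hi => (hP.1 i hi).le
  obtain ⟨v, e, hv, hv0, he, hve⟩ :=
    exists_antitone_rearrangement m fun j _ => push_nonneg hP0 f j
  have hrearr : ∀ G : ℝ → ℝ, ∑ i ∈ range m, G (v i) = ∑ j ∈ Icc 1 m, G (push n f P j) :=
    fun G => (sum_nbij e he.mapsTo he.injOn he.surjOn fun j hj => by rw [hve j hj]).symm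
  have hv1 : ∑ i ∈ range m, v i = 1 := (hrearr id).trans ((sum_push P hf).trans hP.2)
  have hPv : ∀ t ≤ m, ∑ i ∈ Icc 1 t, P i ≤ ∑ i ∈ range t, v i := fun t ht =>
    sum_Icc_le_sum_range_of_rearrangement hP0 hf hv hv0 he.injOn hve (ht.trans hmn)
  rw [← hrearr (· ^ α), sum_Icc_one_eq_sum_range]
  exact sum_range_rpow_le_of_prefix_le
    (fun i j hij => tildeX_le_tildeX_of_le hm hmn hP hdec (by omega) (by omega))
    (fun i => tildeX_pos hm hmn hP hdec (by omega)) hv0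
    (fun t ht => sum_range_tildeX_succ_le hm hmn hP hdec hv hv1 hPv ht)
    (hv1.trans (sum_range_tildeX_succ hm hmn hP hdec).symm) hα0 hα1

theorem stmt17 (n m k : ℕ) (hm : 2 ≤ m) (hmn : m < n) (hk : 1 ≤ k)
    (P : ℕ → ℝ) (hP : IsPMF n P) (hdec : DecOn n P)
    (f : ℕ → ℕ) (hf : ∀ i ∈ Finset.Icc 1 n, f i ∈ Finset.Icc 1 m)
    (gX : (Fin k → ℕ) → ℕ) (hgX : IsRanking n k P gX)
    (gY : (Fin k → ℕ) → ℕ) (hgY : IsRanking m k (push n f P) gY) :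
    ∀ ρ : ℝ, 0 < ρ →
      ρ * (renyiH n (1 / (1 + ρ)) P - renyiH m (1 / (1 + ρ)) (tildeX n m P))
          - (ρ / (k : ℝ)) * Real.log (1 + (k : ℝ) * Real.log n)
        ≤ (1 / (k : ℝ)) *
            Real.log (gmoment n k P gX ρ / gmoment m k (push n f P) gY ρ) := by
  intro ρ hρ
  have hP0 : ∀ i ∈ Icc 1 n, 0 ≤ P i := fun i hi => (hP.1 i hi).le
  have hQ0 : ∀ j ∈ Icc 1 m, 0 ≤ push n f P j := fun j _ => push_nonneg hP0 f j
  have hQsum : ∑ j ∈ Icc 1 m, push n f P j = 1 := (sum_push P hf).trans hP.2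
  have hα1 : 1 / (1 + ρ) ≤ 1 := div_le_one_of_le₀ (by linarith) (by linarith)
  set SP := ∑ i ∈ Icc 1 n, P i ^ (1 / (1 + ρ))
  set SX := ∑ j ∈ Icc 1 m, tildeX n m P j ^ (1 / (1 + ρ))
  have hQX := sum_push_rpow_le_sum_tildeX_rpow hm hmn.le hP hdec hf (by positivity) hα1
  have hlogQX := log_le_log (by linarith [one_le_sum_rpow hQ0 hQsum hα1]) hQX
  have hlogX := le_log_gmoment hP0 hP.2 hgX.1 hρ
  have hlogY := (log_gmoment_le hQ0 hQsum hgY hρ).trans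
    (mul_le_mul_of_nonneg_left hlogQX (by positivity))
  have hEX := one_le_gmoment hP0 hP.2 (fun x hx => (hgX.1.mapsTo hx).1) hρ.le
  have hEY := one_le_gmoment hQ0 hQsum (fun x hx => (hgY.1.mapsTo hx).1) hρ.le
  have hk0 : (0 : ℝ) < k := by exact_mod_cast hk
  have hρ0 := hρ.ne'
  rw [renyiH_one_div_one_add n P hρ, renyiH_one_div_one_add m _ hρ,
    log_div (by positivity) (by positivity)]
  calc _ = (k * (1 + ρ) * (log SP - log SX) - ρ * log (1 + k * log n)) / k := by
        field_simp; ring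
    _ ≤ (log (gmoment n k P gX ρ) - log (gmoment m k (push n f P) gY ρ)) / k :=
        div_le_div_of_nonneg_right (by linarith) hk0.le
    _ = _ := by ring
end
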